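/- arXiv:2404.06585 — 4 statements merged into one kernel-verified Lean document; each statement's English description precedes it below -/
import Mathlib

section
/- Let 132 and 231 denote the corresponding patterns in S_3 (in one-line notation). Then μ(T_{132} < T_{231}) = (e² − 2e − 1)/2. -/
open MeasureTheory ProbabilityTheory Real

noncomputable section

/-- The window of `x` of length `k` starting at position `i` (0-indexed) is a consecutive
occurrence of the pattern `σ`, i.e., its standardization is `σ` (relative orders agree). -/
def OccursAt {k : ℕ} (σ : Equiv.Perm (Fin k)) (x : ℕ → ℝ) (i : ℕ) : Prop :=
  ∀ a b : Fin k, x (i + a) < x (i + b) ↔ σ a < σ b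

/-- `hitTime σ x` is the number of draws until the first consecutive occurrence of `σ`,
i.e., the least `j ≥ k` such that the window `x_{j-k}, …, x_{j-1}` is an occurrence of `σ`. -/
def hitTime {k : ℕ} (σ : Equiv.Perm (Fin k)) (x : ℕ → ℝ) : ℕ :=
  sInf {j | k ≤ j ∧ OccursAt σ x (j - k)}

/-- `μ` is the law of an i.i.d. sequence of uniform random variables on `[0,1]`:
a probability measure on `ℕ → ℝ` whose finite-dimensional marginals are products of
the uniform measure on `[0,1]`. -/
def IsIIDUniform (μ : Measure (ℕ → ℝ)) : Prop :=
  IsProbabilityMeasure μ ∧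
  ∀ n : ℕ, μ.map (fun x (i : Fin n) => x i) =
    Measure.pi (fun _ : Fin n => (volume : Measure ℝ).restrict (Set.Icc 0 1))

/-- The pattern `σ ∈ S_k` occurs consecutively at position `i` (0-indexed) in the
permutation `p ∈ S_n`, written in one-line notation. -/
def PermOccursAt {k n : ℕ} (σ : Equiv.Perm (Fin k)) (p : Equiv.Perm (Fin n)) (i : ℕ) : Prop :=
  ∃ h : i + k ≤ n, ∀ a b : Fin k,
    p ⟨i + a, Nat.lt_of_lt_of_le (Nat.add_lt_add_left a.isLt i) h⟩ <
      p ⟨i + b, Nat.lt_of_lt_of_le (Nat.add_lt_add_left b.isLt i) h⟩ ↔ σ a < σ b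

/-- `avoidCount σ n` is the number `α_n(σ)` of permutations in `S_n` avoiding `σ`
as a consecutive pattern. -/
def avoidCount {k : ℕ} (σ : Equiv.Perm (Fin k)) (n : ℕ) : ℕ :=
  Nat.card {p : Equiv.Perm (Fin n) // ∀ i, ¬ PermOccursAt σ p i}

/-- Neither of the patterns `σ`, `τ` contains a consecutive occurrence of the other. -/
def Incomparable {k l : ℕ} (σ : Equiv.Perm (Fin k)) (τ : Equiv.Perm (Fin l)) : Prop :=
  (∀ i, ¬ PermOccursAt σ τ i) ∧ (∀ i, ¬ PermOccursAt τ σ i)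

namespace P132
open scoped ENNReal Classical

def m0 : Measure ℝ := volume.restrict (Set.Icc 0 1)

instance : IsProbabilityMeasure m0 := by
  constructor
  rw [m0, Measure.restrict_apply MeasurableSet.univ, Set.univ_inter, Real.volume_Icc]
  norm_num

def nu (k : ℕ) : Measure (Fin k → ℝ) := Measure.pi fun _ => m0

instance (k : ℕ) : IsProbabilityMeasure (nu k) := by
  rw [nu]; infer_instance

def proj (k : ℕ) (x : ℕ → ℝ) : Fin k → ℝ := fun i => x i

lemma measurable_proj (k : ℕ) : Measurable (proj k) :=
  measurable_pi_lambda _ fun i => measurable_pi_apply _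

lemma marginal {μ : Measure (ℕ → ℝ)} (hμ : IsIIDUniform μ) {k : ℕ}
    {S : Set (Fin k → ℝ)} (hS : MeasurableSet S) :
    μ (proj k ⁻¹' S) = nu k S := by
  rw [← Measure.map_apply (measurable_proj k) hS]
  exact congrFun (congrArg _ (hμ.2 k)) S

lemma measurable_cons {n : ℕ} :
    Measurable (fun p : ℝ × (Fin n → ℝ) => (Fin.cons p.1 p.2 : Fin (n+1) → ℝ)) := by
  apply measurable_pi_lambda
  intro i
  refine Fin.cases ?_ ?_ i
  · simpa using measurable_fst
  · intro j; simpa [Function.comp_def] using (measurable_pi_apply j).comp measurable_snd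

lemma peel {n : ℕ} {S : Set (Fin (n+1) → ℝ)} (hS : MeasurableSet S) :
    nu (n+1) S = ∫⁻ t, nu n {y | Fin.cons t y ∈ S} ∂m0 := by
  have hmp := measurePreserving_piFinSuccAbove (fun _ : Fin (n+1) => m0) 0
  set e := MeasurableEquiv.piFinSuccAbove (fun _ : Fin (n+1) => ℝ) 0
  have hA : MeasurableSet ((fun p : ℝ × (Fin n → ℝ) => (Fin.cons p.1 p.2 : Fin (n+1) → ℝ)) ⁻¹' S) :=
    measurable_cons hS
  have h1 : e ⁻¹' ((fun p : ℝ × (Fin n → ℝ) => (Fin.cons p.1 p.2 : Fin (n+1) → ℝ)) ⁻¹' S) = S := by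
    ext f
    simp only [Set.mem_preimage]
    have : (Fin.cons (e f).1 (e f).2 : Fin (n+1) → ℝ) = f := by
      ext i
      refine Fin.cases ?_ ?_ i
      · rfl
      · intro j
        simp [e, MeasurableEquiv.piFinSuccAbove, Fin.succAbove]
        rfl
    rw [this]
  have := hmp.measure_preimage (hA.nullMeasurableSet)
  rw [h1] at this
  rw [nu, this, Measure.prod_apply hA]
  rfl

lemma coordEval {k : ℕ} (j : Fin k) {B : Set ℝ} (hB : MeasurableSet B) :
    nu k {z | z j ∈ B} = m0 B := by
  have : {z : Fin k → ℝ | z j ∈ B} = Set.univ.pi (fun i => if i = j then B else Set.univ) := by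
    ext z
    simp only [Set.mem_setOf_eq, Set.mem_pi, Set.mem_univ, forall_true_left]
    constructor
    · intro h i; split_ifs with hh; · subst hh; exact h
      · trivial
    · intro h; have := h j; simpa using this
  rw [this, nu, Measure.pi_pi]
  simp only [apply_ite m0, measure_univ]
  rw [Finset.prod_ite_eq' Finset.univ j (fun _ => m0 B)]
  simp


variable {σ τ : Equiv.Perm (Fin 3)}

lemma occ132 (h0 : σ 0 = 0) (h1 : σ 1 = 2) (h2 : σ 2 = 1) (x : ℕ → ℝ) (i : ℕ) :
    OccursAt σ x i ↔ (x i < x (i+2) ∧ x (i+2) < x (i+1)) := by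
  constructor
  · intro h
    have ha := h 0 2
    have hb := h 2 1
    rw [h0, h2] at ha
    rw [h2, h1] at hb
    simp only [Fin.isValue, Fin.val_zero, add_zero, Fin.val_two, Fin.val_one] at ha hb
    constructor
    · exact ha.2 (by decide)
    · exact hb.2 (by decide)
  · rintro ⟨hA, hB⟩
    intro a b
    have hfin : ∀ c : Fin 3, c = 0 ∨ c = 1 ∨ c = 2 := by decide
    rcases hfin a with rfl | rfl | rfl <;> rcases hfin b with rfl | rfl | rfl <;>
      simp only [Fin.isValue, Fin.val_zero, add_zero, Fin.val_one, Fin.val_two, h0, h1, h2] <;>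
      constructor <;> intro hh <;>
        first | linarith | exact absurd hh (by decide) | decide

lemma occ231 (h0 : τ 0 = 1) (h1 : τ 1 = 2) (h2 : τ 2 = 0) (x : ℕ → ℝ) (i : ℕ) :
    OccursAt τ x i ↔ (x (i+2) < x i ∧ x i < x (i+1)) := by
  constructor
  · intro h
    have ha := h 2 0
    have hb := h 0 1
    rw [h0, h2] at ha
    rw [h0, h1] at hb
    simp only [Fin.isValue, Fin.val_zero, add_zero, Fin.val_two, Fin.val_one] at ha hb
    exact ⟨ha.2 (by decide), hb.2 (by decide)⟩
  · rintro ⟨hA, hB⟩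
    intro a b
    have hfin : ∀ c : Fin 3, c = 0 ∨ c = 1 ∨ c = 2 := by decide
    rcases hfin a with rfl | rfl | rfl <;> rcases hfin b with rfl | rfl | rfl <;>
      simp only [Fin.isValue, Fin.val_zero, add_zero, Fin.val_one, Fin.val_two, h0, h1, h2] <;>
      constructor <;> intro hh <;>
        first | linarith | exact absurd hh (by decide) | decide

/-! ### Null sets -/

lemma m0_singleton (p : ℝ) : m0 {p} = 0 := by
  rw [m0, Measure.restrict_apply (measurableSet_singleton p)]
  exact le_antisymm (le_trans (measure_mono Set.inter_subset_left)
    (le_of_eq Real.volume_singleton)) (zero_le)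

lemma nu_eq_null {n : ℕ} (a b : Fin (n+1)) (hab : b ≠ a) :
    nu (n+1) {f : Fin (n+1) → ℝ | f a = f b} = 0 := by
  obtain ⟨c, hc⟩ := Fin.exists_succAbove_eq hab
  have hmp := measurePreserving_piFinSuccAbove (fun _ : Fin (n+1) => m0) a
  set e := MeasurableEquiv.piFinSuccAbove (fun _ : Fin (n+1) => ℝ) a with he
  have hA : MeasurableSet {p : ℝ × (Fin n → ℝ) | p.1 = p.2 c} :=
    measurableSet_eq_fun measurable_fst ((measurable_pi_apply c).comp measurable_snd)
  have h1 : e ⁻¹' {p : ℝ × (Fin n → ℝ) | p.1 = p.2 c} = {f : Fin (n+1) → ℝ | f a = f b} := by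
    ext f
    have : e f = (f a, fun j => f (a.succAbove j)) := rfl
    simp [this, hc]
  have h2 := hmp.measure_preimage hA.nullMeasurableSet
  rw [h1] at h2
  rw [nu, h2, Measure.prod_apply_symm hA]
  have h3 : ∀ y : Fin n → ℝ,
      m0 ((fun t => (t, y)) ⁻¹' {p : ℝ × (Fin n → ℝ) | p.1 = p.2 c}) = 0 := by
    intro y
    have : ((fun t => (t, y)) ⁻¹' {p : ℝ × (Fin n → ℝ) | p.1 = p.2 c}) = {y c} := by
      ext t; simp
    rw [this]; exact m0_singleton _
  calc (∫⁻ y, m0 ((fun t => (t, y)) ⁻¹' {p : ℝ × (Fin n → ℝ) | p.1 = p.2 c}) ∂(Measure.pi fun _ : Fin n => m0))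
      = ∫⁻ _, 0 ∂(Measure.pi fun _ : Fin n => m0) := by
        exact lintegral_congr h3
    _ = 0 := lintegral_zero

lemma ties_null {μ : Measure (ℕ → ℝ)} (hμ : IsIIDUniform μ) :
    μ {x : ℕ → ℝ | ∃ i j : ℕ, i ≠ j ∧ x i = x j} = 0 := by
  have hsub : {x : ℕ → ℝ | ∃ i j : ℕ, i ≠ j ∧ x i = x j} ⊆
      ⋃ p : ℕ × ℕ, {x : ℕ → ℝ | p.1 ≠ p.2 ∧ x p.1 = x p.2} := by
    rintro x ⟨i, j, hij, hx⟩
    exact Set.mem_iUnion.2 ⟨(i, j), hij, hx⟩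
  refine le_antisymm (le_trans (measure_mono hsub) ?_) (zero_le)
  refine le_trans (measure_iUnion_le _) ?_
  have : ∀ p : ℕ × ℕ, μ {x : ℕ → ℝ | p.1 ≠ p.2 ∧ x p.1 = x p.2} = 0 := by
    rintro ⟨i, j⟩
    by_cases hij : i = j
    · simp [hij]
    · have hi : i < max i j + 1 := by omega
      have hj : j < max i j + 1 := by omega
      have hk : max i j + 1 = (max i j) + 1 := rfl
      set a : Fin (max i j + 1) := ⟨i, hi⟩
      set b : Fin (max i j + 1) := ⟨j, hj⟩
      have hab : b ≠ a := by
        simp only [a, b, Ne, Fin.mk.injEq]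
        omega
      have hS : MeasurableSet {f : Fin (max i j + 1) → ℝ | f a = f b} :=
        measurableSet_eq_fun (measurable_pi_apply a) (measurable_pi_apply b)
      have heq : {x : ℕ → ℝ | i ≠ j ∧ x i = x j} =
          proj (max i j + 1) ⁻¹' {f : Fin (max i j + 1) → ℝ | f a = f b} := by
        ext x
        simp only [Set.mem_setOf_eq, Set.mem_preimage, proj, hij, ne_eq,
          not_false_eq_true, true_and]
        exact Iff.rfl
      simp only [ne_eq, heq]
      rw [marginal hμ hS]
      exact nu_eq_null a b hab
  simp [this]

lemma x0_null {μ : Measure (ℕ → ℝ)} (hμ : IsIIDUniform μ) :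
    μ {x : ℕ → ℝ | 1 ≤ x 0} = 0 := by
  have heq : {x : ℕ → ℝ | 1 ≤ x 0} = proj 1 ⁻¹' {y : Fin 1 → ℝ | y 0 ∈ Set.Ici 1} := by
    ext x; rfl
  rw [heq, marginal hμ (by exact (measurable_pi_apply _) measurableSet_Ici),
    coordEval _ measurableSet_Ici]
  rw [m0, Measure.restrict_apply measurableSet_Ici]
  have : Set.Ici (1:ℝ) ∩ Set.Icc 0 1 = {1} := by
    ext z
    simp only [Set.mem_inter_iff, Set.mem_Ici, Set.mem_Icc, Set.mem_singleton_iff]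
    constructor
    · rintro ⟨h1, _, h3⟩; linarith
    · rintro rfl; norm_num
  rw [this]
  exact Real.volume_singleton

/-! ### Patterns occur almost surely -/

def blockSet (P : ℝ → ℝ → ℝ → Prop) : (R : ℕ) → Set (Fin (3*R) → ℝ)
  | 0 => Set.univ
  | (R+1) => {y : Fin (3*(R+1)) → ℝ |
      ¬ P (y ⟨0, by omega⟩) (y ⟨1, by omega⟩) (y ⟨2, by omega⟩) ∧
      (fun i : Fin (3*R) => y ⟨(i:ℕ)+3, by omega⟩) ∈ blockSet P R}

lemma blockSet_meas {P : ℝ → ℝ → ℝ → Prop}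
    (hPm : MeasurableSet {p : ℝ × ℝ × ℝ | P p.1 p.2.1 p.2.2}) :
    ∀ R, MeasurableSet (blockSet P R)
  | 0 => MeasurableSet.univ
  | (R+1) => by
    have h1 : MeasurableSet {y : Fin (3*(R+1)) → ℝ |
        P (y ⟨0, by omega⟩) (y ⟨1, by omega⟩) (y ⟨2, by omega⟩)} := by
      have : Measurable (fun y : Fin (3*(R+1)) → ℝ =>
          ((y ⟨0, by omega⟩, y ⟨1, by omega⟩, y ⟨2, by omega⟩) : ℝ × ℝ × ℝ)) :=
        Measurable.prod (measurable_pi_apply _)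
          (Measurable.prod (measurable_pi_apply _) (measurable_pi_apply _))
      exact this hPm
    have h2 : Measurable (fun y : Fin (3*(R+1)) → ℝ =>
        (fun i : Fin (3*R) => y ⟨(i:ℕ)+3, by omega⟩)) :=
      measurable_pi_lambda _ fun i => measurable_pi_apply _
    exact (h1.compl).inter (h2 (blockSet_meas hPm R))

set_option maxHeartbeats 2000000 in
lemma blockSet_measure_le {P : ℝ → ℝ → ℝ → Prop}
    (hPm : MeasurableSet {p : ℝ × ℝ × ℝ | P p.1 p.2.1 p.2.2})
    {q : ℝ≥0∞} (hQ : (∫⁻ t, ∫⁻ s, m0 {u | ¬ P t s u} ∂m0 ∂m0) ≤ q) :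
    ∀ R, nu (3*R) (blockSet P R) ≤ q ^ R := by
  intro R
  induction R with
  | zero => simp [blockSet]
  | succ R ih =>
    have hmeas3 : MeasurableSet {p : ℝ × ℝ × ℝ | ¬ P p.1 p.2.1 p.2.2} := hPm.compl
    -- measurability of fibers
    have hm1 : ∀ t s : ℝ, MeasurableSet {u | ¬ P t s u} := by
      intro t s
      have : Measurable (fun u : ℝ => ((t, s, u) : ℝ × ℝ × ℝ)) :=
        Measurable.prod measurable_const (Measurable.prod measurable_const measurable_id)
      exact this hmeas3
    have hg : Measurable (fun p : ℝ × ℝ => m0 {u | ¬ P p.1 p.2 u}) := by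
      have hset : MeasurableSet {p : (ℝ × ℝ) × ℝ | ¬ P p.1.1 p.1.2 p.2} := by
        have : Measurable (fun p : (ℝ × ℝ) × ℝ => ((p.1.1, p.1.2, p.2) : ℝ × ℝ × ℝ)) := by
          fun_prop
        exact this hmeas3
      have h := measurable_measure_prodMk_left (ν := m0) hset
      have heq : (fun p : ℝ × ℝ => m0 {u | ¬ P p.1 p.2 u}) =
          fun p : ℝ × ℝ => m0 (Prod.mk p ⁻¹' {p : (ℝ × ℝ) × ℝ | ¬ P p.1.1 p.1.2 p.2}) := by
        funext p
        congr 1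
      rw [heq]
      exact h
    -- peel three times
    have key : nu (3*(R+1)) (blockSet P (R+1)) =
        ∫⁻ t, ∫⁻ s, ∫⁻ u, {u' | ¬ P t s u'}.indicator
          (fun _ => nu (3*R) (blockSet P R)) u ∂m0 ∂m0 ∂m0 := by
      show (nu (3*R+2+1)) (blockSet P (R+1)) = _
      rw [peel (n := 3*R+2) (blockSet_meas hPm (R+1))]
      congr 1
      funext t
      have hS1 : MeasurableSet {y : Fin (3*R+2) → ℝ |
          Fin.cons t y ∈ blockSet P (R+1)} := by
        exact measurable_cons.comp (measurable_prodMk_left) (blockSet_meas hPm (R+1))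
      rw [peel hS1]
      congr 1
      funext s
      have hS2 : MeasurableSet {z : Fin (3*R+1) → ℝ |
          Fin.cons s z ∈ {y : Fin (3*R+2) → ℝ | Fin.cons t y ∈ blockSet P (R+1)}} := by
        exact (measurable_cons.comp measurable_prodMk_left)
          ((measurable_cons.comp measurable_prodMk_left) (blockSet_meas hPm (R+1)))
      rw [peel hS2]
      congr 1
      funext u
      have hslice : {w : Fin (3*R) → ℝ | Fin.cons u w ∈ {z : Fin (3*R+1) → ℝ |
          Fin.cons s z ∈ {y : Fin (3*R+2) → ℝ | Fin.cons t y ∈ blockSet P (R+1)}}} =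
          {w : Fin (3*R) → ℝ | ¬ P t s u ∧ w ∈ blockSet P R} := rfl
      rw [hslice]
      by_cases hP : P t s u
      · have : {w : Fin (3*R) → ℝ | ¬ P t s u ∧ w ∈ blockSet P R} = ∅ := by
          ext w; simp [hP]
        simp [this, Set.indicator, hP]
      · have : {w : Fin (3*R) → ℝ | ¬ P t s u ∧ w ∈ blockSet P R} = blockSet P R := by
          ext w; simp [hP]
        simp [this, Set.indicator, hP]
    rw [key]
    have inner_eq : ∀ t s : ℝ, (∫⁻ u, {u' | ¬ P t s u'}.indicator
        (fun _ => nu (3*R) (blockSet P R)) u ∂m0) =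
        nu (3*R) (blockSet P R) * m0 {u | ¬ P t s u} := by
      intro t s
      rw [lintegral_indicator_const (hm1 t s)]
    calc (∫⁻ t, ∫⁻ s, ∫⁻ u, {u' | ¬ P t s u'}.indicator
          (fun _ => nu (3*R) (blockSet P R)) u ∂m0 ∂m0 ∂m0)
        = ∫⁻ t, ∫⁻ s, nu (3*R) (blockSet P R) * m0 {u | ¬ P t s u} ∂m0 ∂m0 :=
          lintegral_congr fun t => lintegral_congr fun s => inner_eq t s
      _ = nu (3*R) (blockSet P R) * ∫⁻ t, ∫⁻ s, m0 {u | ¬ P t s u} ∂m0 ∂m0 := by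
          have h1 : ∀ t : ℝ, (∫⁻ s, nu (3*R) (blockSet P R) * m0 {u | ¬ P t s u} ∂m0)
              = nu (3*R) (blockSet P R) * ∫⁻ s, m0 {u | ¬ P t s u} ∂m0 := by
            intro t
            exact lintegral_const_mul _ (hg.comp (measurable_prodMk_left (x := t)))
          rw [lintegral_congr h1]
          exact lintegral_const_mul _ (hg.lintegral_prod_right')
      _ ≤ q ^ R * q := mul_le_mul' ih hQ
      _ = q ^ (R+1) := by rw [pow_succ]

def NoOcc (P : ℝ → ℝ → ℝ → Prop) : Set (ℕ → ℝ) :=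
  {x | ∀ i : ℕ, ¬ P (x i) (x (i+1)) (x (i+2))}

lemma noOcc_subset (P : ℝ → ℝ → ℝ → Prop) :
    ∀ R, NoOcc P ⊆ proj (3*R) ⁻¹' blockSet P R
  | 0 => fun x _ => Set.mem_univ _
  | (R+1) => by
    intro x hx
    refine ⟨hx 0, ?_⟩
    have : (fun i : Fin (3*R) => proj (3*(R+1)) x ⟨(i:ℕ)+3, by omega⟩) =
        proj (3*R) (fun j => x (j+3)) := rfl
    rw [this]
    refine noOcc_subset P R ?_
    intro i
    have := hx (i+3)
    convert this using 3 <;> omega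

lemma noOcc_null {μ : Measure (ℕ → ℝ)} (hμ : IsIIDUniform μ)
    {P : ℝ → ℝ → ℝ → Prop}
    (hPm : MeasurableSet {p : ℝ × ℝ × ℝ | P p.1 p.2.1 p.2.2})
    {q : ℝ≥0∞} (hq : q < 1)
    (hQ : (∫⁻ t, ∫⁻ s, m0 {u | ¬ P t s u} ∂m0 ∂m0) ≤ q) :
    μ (NoOcc P) = 0 := by
  have hR : ∀ R : ℕ, μ (NoOcc P) ≤ q ^ R := by
    intro R
    calc μ (NoOcc P) ≤ μ (proj (3*R) ⁻¹' blockSet P R) :=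
          measure_mono (noOcc_subset P R)
      _ = nu (3*R) (blockSet P R) := marginal hμ (blockSet_meas hPm _)
      _ ≤ q ^ R := blockSet_measure_le hPm hQ R
  have htend := ENNReal.tendsto_pow_atTop_nhds_zero_of_lt_one hq
  exact le_antisymm (ge_of_tendsto' htend hR) (zero_le)

lemma one_sub_ofReal {r : ℝ} (h0 : 0 ≤ r) :
    (1:ℝ≥0∞) - ENNReal.ofReal r = ENNReal.ofReal (1 - r) := by
  rw [← ENNReal.ofReal_one, ← ENNReal.ofReal_sub _ h0]

lemma lint_if {A : Set ℝ} (hA : MeasurableSet A) (a b : ℝ≥0∞) :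
    (∫⁻ t, (if t ∈ A then a else b) ∂m0) = a * m0 A + b * m0 Aᶜ := by
  have hfun : (fun t => if t ∈ A then a else b) =
      fun t => A.indicator (fun _ => a) t + Aᶜ.indicator (fun _ => b) t := by
    funext t
    by_cases h : t ∈ A <;> simp [h, Set.indicator]
  rw [hfun, lintegral_add_left (measurable_const.indicator hA),
    lintegral_indicator_const hA, lintegral_indicator_const hA.compl]

lemma m0_Ioo {a b : ℝ} (h0 : 0 ≤ a) (h1 : b ≤ 1) :
    m0 (Set.Ioo a b) = ENNReal.ofReal (b - a) := by
  rw [m0, Measure.restrict_apply measurableSet_Ioo,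
    Set.inter_eq_left.mpr
      (fun u hu => Set.mem_Icc.mpr ⟨le_trans h0 (le_of_lt hu.1), le_trans (le_of_lt hu.2) h1⟩)]
  exact Real.volume_Ioo

lemma Q_bound {P : ℝ → ℝ → ℝ → Prop} {I0 I1 : Set ℝ}
    (hI0m : MeasurableSet I0) (hI1m : MeasurableSet I1)
    (hI0 : m0 I0 = ENNReal.ofReal (1/3)) (hI1 : m0 I1 = ENNReal.ofReal (1/3))
    (hP : ∀ t ∈ I0, ∀ s ∈ I1, m0 {u | ¬ P t s u} ≤ ENNReal.ofReal (2/3)) :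
    (∫⁻ t, ∫⁻ s, m0 {u | ¬ P t s u} ∂m0 ∂m0) ≤ ENNReal.ofReal (26/27) := by
  have step1 : ∀ t, (∫⁻ s, m0 {u | ¬ P t s u} ∂m0) ≤
      (if t ∈ I0 then ENNReal.ofReal (8/9) else 1) := by
    intro t
    by_cases ht : t ∈ I0
    · simp only [ht, if_true]
      calc (∫⁻ s, m0 {u | ¬ P t s u} ∂m0)
          ≤ ∫⁻ s, (if s ∈ I1 then ENNReal.ofReal (2/3) else 1) ∂m0 := by
            apply lintegral_mono
            intro s
            by_cases hs : s ∈ I1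
            · simpa only [hs, if_true] using hP t ht s hs
            · simpa only [hs, if_false] using prob_le_one
        _ = ENNReal.ofReal (2/3) * m0 I1 + 1 * m0 I1ᶜ := lint_if hI1m _ _
        _ = ENNReal.ofReal (8/9) := by
            rw [hI1, one_mul, prob_compl_eq_one_sub hI1m, hI1,
              one_sub_ofReal (by norm_num), ← ENNReal.ofReal_mul (by norm_num),
              ← ENNReal.ofReal_add (by norm_num) (by norm_num)]
            norm_num
    · simp only [ht, if_false]
      calc (∫⁻ s, m0 {u | ¬ P t s u} ∂m0) ≤ ∫⁻ _, 1 ∂m0 :=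
            lintegral_mono fun s => prob_le_one
        _ = 1 := by simp
  calc (∫⁻ t, ∫⁻ s, m0 {u | ¬ P t s u} ∂m0 ∂m0)
      ≤ ∫⁻ t, (if t ∈ I0 then ENNReal.ofReal (8/9) else 1) ∂m0 := lintegral_mono step1
    _ = ENNReal.ofReal (8/9) * m0 I0 + 1 * m0 I0ᶜ := lint_if hI0m _ _
    _ = ENNReal.ofReal (26/27) := by
        rw [hI0, one_mul, prob_compl_eq_one_sub hI0m, hI0,
          one_sub_ofReal (by norm_num), ← ENNReal.ofReal_mul (by norm_num),
          ← ENNReal.ofReal_add (by norm_num) (by norm_num)]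
        norm_num

lemma noSigma_null {μ : Measure (ℕ → ℝ)} (hμ : IsIIDUniform μ)
    (h0 : σ 0 = 0) (h1 : σ 1 = 2) (h2 : σ 2 = 1) :
    μ {x : ℕ → ℝ | ∀ i, ¬ OccursAt σ x i} = 0 := by
  have hset : {x : ℕ → ℝ | ∀ i, ¬ OccursAt σ x i} =
      NoOcc (fun t s u => t < u ∧ u < s) := by
    ext x
    simp only [NoOcc, Set.mem_setOf_eq]
    refine forall_congr' fun i => ?_
    rw [occ132 h0 h1 h2]
  rw [hset]
  have hPm : MeasurableSet {p : ℝ × ℝ × ℝ | p.1 < p.2.2 ∧ p.2.2 < p.2.1} :=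
    (measurableSet_lt measurable_fst measurable_snd.snd).inter
      (measurableSet_lt measurable_snd.snd measurable_snd.fst)
  refine noOcc_null hμ hPm (q := ENNReal.ofReal (26/27))
    (by rw [show (1:ℝ≥0∞) = ENNReal.ofReal 1 by simp]
        exact ENNReal.ofReal_lt_ofReal_iff_of_nonneg (by norm_num) |>.mpr (by norm_num)) ?_
  refine Q_bound (I0 := Set.Ioo 0 (1/3)) (I1 := Set.Ioo (2/3) 1)
    measurableSet_Ioo measurableSet_Ioo
    (by rw [m0_Ioo (by norm_num) (by norm_num)]; norm_num)
    (by rw [m0_Ioo (by norm_num) (by norm_num)]; norm_num) ?_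
  rintro t ⟨ht0, ht1⟩ s ⟨hs0, hs1⟩
  have hset2 : {u : ℝ | ¬ (t < u ∧ u < s)} = (Set.Ioo t s)ᶜ := by
    ext u; simp [Set.mem_Ioo]
  rw [hset2, prob_compl_eq_one_sub measurableSet_Ioo,
    m0_Ioo (le_of_lt ht0) (le_of_lt hs1), one_sub_ofReal (by linarith)]
  exact ENNReal.ofReal_le_ofReal (by linarith)

lemma noTau_null {μ : Measure (ℕ → ℝ)} (hμ : IsIIDUniform μ)
    (h0 : τ 0 = 1) (h1 : τ 1 = 2) (h2 : τ 2 = 0) :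
    μ {x : ℕ → ℝ | ∀ i, ¬ OccursAt τ x i} = 0 := by
  have hset : {x : ℕ → ℝ | ∀ i, ¬ OccursAt τ x i} =
      NoOcc (fun t s u => u < t ∧ t < s) := by
    ext x
    simp only [NoOcc, Set.mem_setOf_eq]
    refine forall_congr' fun i => ?_
    rw [occ231 h0 h1 h2]
  rw [hset]
  have hPm : MeasurableSet {p : ℝ × ℝ × ℝ | p.2.2 < p.1 ∧ p.1 < p.2.1} :=
    (measurableSet_lt measurable_snd.snd measurable_fst).inter
      (measurableSet_lt measurable_fst measurable_snd.fst)
  refine noOcc_null hμ hPm (q := ENNReal.ofReal (26/27))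
    (by rw [show (1:ℝ≥0∞) = ENNReal.ofReal 1 by simp]
        exact ENNReal.ofReal_lt_ofReal_iff_of_nonneg (by norm_num) |>.mpr (by norm_num)) ?_
  refine Q_bound (I0 := Set.Ioo (1/3) (2/3)) (I1 := Set.Ioo (2/3) 1)
    measurableSet_Ioo measurableSet_Ioo
    (by rw [m0_Ioo (by norm_num) (by norm_num)]; norm_num)
    (by rw [m0_Ioo (by norm_num) (by norm_num)]; norm_num) ?_
  rintro t ⟨ht0, ht1⟩ s ⟨hs0, hs1⟩
  have hts : t < s := lt_trans ht1 hs0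
  have hset2 : {u : ℝ | ¬ (u < t ∧ t < s)} = Set.Ici t := by
    ext u
    simp only [Set.mem_setOf_eq, Set.mem_Ici, hts, and_true]
    exact not_lt
  rw [hset2, m0, Measure.restrict_apply measurableSet_Ici]
  have : Set.Ici t ∩ Set.Icc 0 1 = Set.Icc t 1 := by
    ext u
    simp only [Set.mem_inter_iff, Set.mem_Ici, Set.mem_Icc]
    constructor
    · rintro ⟨h1, _, h3⟩; exact ⟨h1, h3⟩
    · rintro ⟨h1, h2⟩; exact ⟨h1, by linarith, h2⟩
  rw [this, Real.volume_Icc]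
  exact ENNReal.ofReal_le_ofReal (by linarith)

/-! ### The regions and their measures -/

def Cset : (r : ℕ) → ℝ → Set (Fin (r+2) → ℝ)
  | 0, v => {y | v < y 0 ∧ v < y 1 ∧ y 1 < y 0}
  | (r+1), v => {y : Fin (r+3) → ℝ | v < y 0 ∧ Fin.tail y ∈ Cset r (y 0)}

def Tset (b : ℕ) : (m : ℕ) → ℝ → Set (Fin (b+3+m) → ℝ)
  | 0, c => {y : Fin (b+3) → ℝ | y 0 < c ∧ Fin.tail y ∈ Cset b (y 0)}
  | (m+1), c => {y : Fin (b+3+m+1) → ℝ | y 0 < c ∧ Fin.tail y ∈ Tset b m (y 0)}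

lemma measurable_tail {n : ℕ} : Measurable (fun y : Fin (n+1) → ℝ => Fin.tail y) :=
  measurable_pi_lambda _ fun i => measurable_pi_apply _

lemma Cset_jointMeas : ∀ r, MeasurableSet {p : ℝ × (Fin (r+2) → ℝ) | p.2 ∈ Cset r p.1}
  | 0 => by
    refine MeasurableSet.inter ?_ (MeasurableSet.inter ?_ ?_)
    · exact measurableSet_lt measurable_fst ((measurable_pi_apply 0).comp measurable_snd)
    · exact measurableSet_lt measurable_fst ((measurable_pi_apply 1).comp measurable_snd)
    · exact measurableSet_lt ((measurable_pi_apply 1).comp measurable_snd)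
        ((measurable_pi_apply 0).comp measurable_snd)
  | (r+1) => by
    have h1 : MeasurableSet {p : ℝ × (Fin (r+3) → ℝ) | p.1 < p.2 0} :=
      measurableSet_lt measurable_fst ((measurable_pi_apply 0).comp measurable_snd)
    have hg : Measurable (fun p : ℝ × (Fin (r+3) → ℝ) => (p.2 0, Fin.tail p.2)) :=
      Measurable.prod ((measurable_pi_apply 0).comp measurable_snd)
        (measurable_tail.comp measurable_snd)
    exact h1.inter (hg (Cset_jointMeas r))

lemma Cset_meas (r : ℕ) (v : ℝ) : MeasurableSet (Cset r v) :=
  measurable_prodMk_left (Cset_jointMeas r)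

lemma Tset_jointMeas (b : ℕ) :
    ∀ m, MeasurableSet {p : ℝ × (Fin (b+3+m) → ℝ) | p.2 ∈ Tset b m p.1}
  | 0 => by
    have h1 : MeasurableSet {p : ℝ × (Fin (b+3) → ℝ) | p.2 0 < p.1} :=
      measurableSet_lt (measurable_snd.eval) measurable_fst
    have hg : Measurable (fun p : ℝ × (Fin (b+3) → ℝ) => (p.2 0, Fin.tail p.2)) :=
      Measurable.prod ((measurable_pi_apply 0).comp measurable_snd)
        (measurable_tail.comp measurable_snd)
    exact h1.inter (hg (Cset_jointMeas b))
  | (m+1) => by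
    have h1 : MeasurableSet {p : ℝ × (Fin (b+3+m+1) → ℝ) | p.2 0 < p.1} :=
      measurableSet_lt (measurable_snd.eval) measurable_fst
    have hg : Measurable (fun p : ℝ × (Fin (b+3+m+1) → ℝ) => (p.2 0, Fin.tail p.2)) :=
      Measurable.prod ((measurable_pi_apply 0).comp measurable_snd)
        (measurable_tail.comp measurable_snd)
    exact h1.inter (hg (Tset_jointMeas b m))

lemma Tset_meas (b m : ℕ) (c : ℝ) : MeasurableSet (Tset b m c) :=
  measurable_prodMk_left (Tset_jointMeas b m)

lemma integ_pow_decay (k : ℕ) (v : ℝ) :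
    (∫ t in v..1, (1-t)^k / (k.factorial : ℝ)) =
      (1-v)^(k+1) / ((k+1).factorial : ℝ) := by
  have hder : ∀ t ∈ Set.uIcc v 1, HasDerivAt
      (fun t : ℝ => -((1-t)^(k+1)) / ((k+1).factorial : ℝ))
      ((1-t)^k / (k.factorial : ℝ)) t := by
    intro t _
    have h1 : HasDerivAt (fun t : ℝ => 1 - t) (-1) t := (hasDerivAt_id t).const_sub 1
    have h2 := h1.pow (k+1)
    have h3 := (h2.neg).div_const ((k+1).factorial : ℝ)
    refine h3.congr_deriv ?_
    have hk : ((k+1).factorial : ℝ) = (k+1) * (k.factorial : ℝ) := by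
      rw [Nat.factorial_succ]; push_cast; ring
    rw [hk]
    have hkf : (k.factorial : ℝ) ≠ 0 := Nat.cast_ne_zero.mpr (Nat.factorial_ne_zero k)
    simp only [Nat.add_sub_cancel, Nat.cast_add, Nat.cast_one]
    field_simp
  rw [intervalIntegral.integral_eq_sub_of_hasDerivAt hder
    ((Continuous.div_const (by continuity) _).intervalIntegrable _ _)]
  simp only [sub_self]
  rw [zero_pow (by omega)]
  ring

lemma lint_cutoff_lower {v : ℝ} (hv0 : 0 ≤ v) (hv1 : v ≤ 1) (g : ℝ → ℝ)
    (hgc : Continuous g) (hg0 : ∀ t ∈ Set.Icc v 1, 0 ≤ g t) :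
    (∫⁻ t, (if v < t then ENNReal.ofReal (g t) else 0) ∂m0) =
      ENNReal.ofReal (∫ t in v..1, g t) := by
  have hfun : (fun t => if v < t then ENNReal.ofReal (g t) else 0) =
      (Set.Ioi v).indicator (fun t => ENNReal.ofReal (g t)) := by
    funext t
    by_cases h : v < t <;> simp [h, Set.indicator, Set.mem_Ioi]
  rw [m0, hfun, lintegral_indicator measurableSet_Ioi,
    Measure.restrict_restrict measurableSet_Ioi]
  have hset : Set.Ioi v ∩ Set.Icc 0 1 = Set.Ioc v 1 := by
    ext t
    simp only [Set.mem_inter_iff, Set.mem_Ioi, Set.mem_Icc, Set.mem_Ioc]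
    constructor
    · rintro ⟨h1, _, h3⟩; exact ⟨h1, h3⟩
    · rintro ⟨h1, h2⟩; exact ⟨h1, le_trans hv0 (le_of_lt h1), h2⟩
  rw [hset, ← ofReal_integral_eq_lintegral_ofReal (hgc.integrableOn_Ioc)
    ((ae_restrict_iff' measurableSet_Ioc).mpr
      (Filter.Eventually.of_forall fun t ht => hg0 t ⟨le_of_lt ht.1, ht.2⟩)),
    intervalIntegral.integral_of_le hv1]

lemma cong_m0 {f g : ℝ → ℝ≥0∞} (h : ∀ t ∈ Set.Icc (0:ℝ) 1, f t = g t) :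
    (∫⁻ t, f t ∂m0) = ∫⁻ t, g t ∂m0 := by
  rw [m0]
  exact lintegral_congr_ae ((ae_restrict_iff' measurableSet_Icc).mpr
    (Filter.Eventually.of_forall h))

lemma Cval : ∀ r, ∀ v ∈ Set.Icc (0:ℝ) 1,
    nu (r+2) (Cset r v) = ENNReal.ofReal ((1-v)^(r+2) / ((r+2).factorial : ℝ))
  | 0 => by
    intro v hv
    rw [peel (Cset_meas 0 v)]
    have hs : ∀ t ∈ Set.Icc (0:ℝ) 1,
        nu 1 {y : Fin 1 → ℝ | Fin.cons t y ∈ Cset 0 v} =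
        (if v < t then ENNReal.ofReal (t - v) else 0) := by
      intro t ht
      have : {y : Fin 1 → ℝ | Fin.cons t y ∈ Cset 0 v} =
          {y : Fin 1 → ℝ | v < t ∧ y 0 ∈ Set.Ioo v t} := rfl
      rw [this]
      by_cases h : v < t
      · have : {y : Fin 1 → ℝ | v < t ∧ y 0 ∈ Set.Ioo v t} =
            {y : Fin 1 → ℝ | y 0 ∈ Set.Ioo v t} := by
          ext y; simp [h]
        rw [this, coordEval 0 measurableSet_Ioo, m0_Ioo hv.1 ht.2]
        simp [h]
      · have : {y : Fin 1 → ℝ | v < t ∧ y 0 ∈ Set.Ioo v t} = ∅ := by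
          ext y; simp [h]
        rw [this]
        simp [h]
    rw [cong_m0 (f := fun t => nu 1 {y : Fin 1 → ℝ | Fin.cons t y ∈ Cset 0 v}) hs,
      lint_cutoff_lower hv.1 hv.2 (fun t => t - v) (by continuity)
        (fun t ht => by simpa using sub_nonneg.mpr ht.1)]
    have hval : (∫ t in v..1, (t - v)) = (1-v)^2/2 := by
      have hder : ∀ t ∈ Set.uIcc v 1, HasDerivAt (fun t : ℝ => (t-v)^2/2) (t - v) t := by
        intro t _
        have h1 : HasDerivAt (fun t : ℝ => t - v) 1 t := (hasDerivAt_id t).sub_const v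
        have h2 := (h1.pow 2).div_const 2
        refine h2.congr_deriv ?_
        push_cast
        ring
      rw [intervalIntegral.integral_eq_sub_of_hasDerivAt hder
        ((by continuity : Continuous fun t : ℝ => t - v).intervalIntegrable _ _)]
      ring
    rw [hval]
    norm_num
  | (r+1) => by
    intro v hv
    rw [peel (Cset_meas (r+1) v)]
    have hs : ∀ t ∈ Set.Icc (0:ℝ) 1,
        nu (r+2) {y : Fin (r+2) → ℝ | Fin.cons t y ∈ Cset (r+1) v} =
        (if v < t then ENNReal.ofReal ((1-t)^(r+2) / ((r+2).factorial : ℝ)) else 0) := by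
      intro t ht
      have hid : {y : Fin (r+2) → ℝ | Fin.cons t y ∈ Cset (r+1) v} =
          {y : Fin (r+2) → ℝ | v < t ∧ y ∈ Cset r t} := rfl
      rw [hid]
      by_cases h : v < t
      · have : {y : Fin (r+2) → ℝ | v < t ∧ y ∈ Cset r t} = Cset r t := by
          ext y; simp [h]
        rw [this, Cval r t ht]
        simp [h]
      · have : {y : Fin (r+2) → ℝ | v < t ∧ y ∈ Cset r t} = ∅ := by
          ext y; simp [h]
        rw [this]
        simp [h]
    rw [cong_m0 (f := fun t => nu (r+2) {y : Fin (r+2) → ℝ | Fin.cons t y ∈ Cset (r+1) v}) hs,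
      lint_cutoff_lower hv.1 hv.2 _ (Continuous.div_const (by continuity) _)
        (fun t ht => by
          simpa using div_nonneg
            (pow_nonneg (by linarith [ht.2] : (0:ℝ) ≤ 1 - t) _) (Nat.cast_nonneg _))]
    rw [integ_pow_decay (r+2) v]

def Jk (m : ℕ) (c v : ℝ) : ℝ≥0∞ :=
  if v < c then ENNReal.ofReal ((c-v)^m / (m.factorial : ℝ)) else 0

def Gk (b : ℕ) (v : ℝ) : ℝ≥0∞ :=
  ENNReal.ofReal ((1-v)^(b+2) / ((b+2).factorial : ℝ))

lemma Jk_measurable_pair (m : ℕ) : Measurable fun p : ℝ × ℝ => Jk m p.1 p.2 := by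
  unfold Jk
  refine Measurable.ite (measurableSet_lt measurable_snd measurable_fst) ?_ measurable_const
  exact ENNReal.measurable_ofReal.comp (by fun_prop)

lemma Gk_measurable (b : ℕ) : Measurable (Gk b) :=
  ENNReal.measurable_ofReal.comp (by fun_prop)

lemma integ_pow_grow (k : ℕ) (v c : ℝ) :
    (∫ t in v..c, (t-v)^k / (k.factorial : ℝ)) = (c-v)^(k+1) / ((k+1).factorial : ℝ) := by
  have hder : ∀ t ∈ Set.uIcc v c, HasDerivAt
      (fun t : ℝ => (t-v)^(k+1) / ((k+1).factorial : ℝ))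
      ((t-v)^k / (k.factorial : ℝ)) t := by
    intro t _
    have h1 : HasDerivAt (fun t : ℝ => t - v) 1 t := (hasDerivAt_id t).sub_const v
    have h2 := (h1.pow (k+1)).div_const ((k+1).factorial : ℝ)
    refine h2.congr_deriv ?_
    have hk : ((k+1).factorial : ℝ) = (k+1) * (k.factorial : ℝ) := by
      rw [Nat.factorial_succ]; push_cast; ring
    rw [hk]
    have hkf : (k.factorial : ℝ) ≠ 0 := Nat.cast_ne_zero.mpr (Nat.factorial_ne_zero k)
    simp only [Nat.add_sub_cancel, Nat.cast_add, Nat.cast_one]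
    field_simp
  rw [intervalIntegral.integral_eq_sub_of_hasDerivAt hder
    ((Continuous.div_const (by continuity) _).intervalIntegrable _ _)]
  simp only [sub_self]
  rw [zero_pow (by omega)]
  ring

lemma inner_step (m : ℕ) {c v : ℝ} (hc : c ∈ Set.Icc (0:ℝ) 1) (hv : v ∈ Set.Icc (0:ℝ) 1) :
    (∫⁻ t, (if v < t ∧ t < c then ENNReal.ofReal ((t-v)^m / (m.factorial : ℝ)) else 0) ∂m0) =
      Jk (m+1) c v := by
  by_cases hvc : v < c
  · have hfun : (fun t => if v < t ∧ t < c then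
        ENNReal.ofReal ((t-v)^m / (m.factorial : ℝ)) else 0) =
        (Set.Ioo v c).indicator (fun t => ENNReal.ofReal ((t-v)^m / (m.factorial : ℝ))) := by
      funext t
      by_cases h : v < t ∧ t < c <;> simp [h, Set.indicator, Set.mem_Ioo]
    rw [m0, hfun, lintegral_indicator measurableSet_Ioo,
      Measure.restrict_restrict measurableSet_Ioo,
      Set.inter_eq_left.mpr (fun u hu => Set.mem_Icc.mpr
        ⟨le_trans hv.1 (le_of_lt hu.1), le_trans (le_of_lt hu.2) hc.2⟩)]
    rw [← ofReal_integral_eq_lintegral_ofReal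
      (((Continuous.div_const (by continuity) _).integrableOn_Ioc).mono_set
        Set.Ioo_subset_Ioc_self)
      ((ae_restrict_iff' measurableSet_Ioo).mpr (Filter.Eventually.of_forall fun t ht => by
        have : (0:ℝ) ≤ t - v := by linarith [ht.1]
        positivity))]
    rw [← MeasureTheory.integral_Ioc_eq_integral_Ioo,
      ← intervalIntegral.integral_of_le (le_of_lt hvc), integ_pow_grow]
    simp [Jk, hvc]
  · have hfun : ∀ t : ℝ, (if v < t ∧ t < c then
        ENNReal.ofReal ((t-v)^m / (m.factorial : ℝ)) else 0) = 0 := by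
      intro t
      have : ¬ (v < t ∧ t < c) := fun ⟨h1, h2⟩ => hvc (lt_trans h1 h2)
      simp [this]
    simp only [hfun, lintegral_zero, Jk, hvc, if_false]

lemma Tval (b : ℕ) : ∀ m, ∀ c ∈ Set.Icc (0:ℝ) 1,
    nu (b+3+m) (Tset b m c) = ∫⁻ v, Jk m c v * Gk b v ∂m0
  | 0 => by
    intro c hc
    rw [peel (Tset_meas b 0 c)]
    apply cong_m0
    intro t ht
    have hid : {y : Fin (b+2) → ℝ | Fin.cons t y ∈ Tset b 0 c} =
        {y : Fin (b+2) → ℝ | t < c ∧ y ∈ Cset b t} := rfl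
    rw [hid]
    by_cases h : t < c
    · have : {y : Fin (b+2) → ℝ | t < c ∧ y ∈ Cset b t} = Cset b t := by
        ext y; simp [h]
      rw [this, Cval b t ht]
      simp [Jk, Gk, h]
    · have : {y : Fin (b+2) → ℝ | t < c ∧ y ∈ Cset b t} = ∅ := by
        ext y; simp [h]
      rw [this]
      simp [Jk, h]
  | (m+1) => by
    intro c hc
    refine (peel (Tset_meas b (m+1) c)).trans ?_
    have step1 : (∫⁻ t, nu (b+3+m) {y : Fin (b+3+m) → ℝ | Fin.cons t y ∈ Tset b (m+1) c} ∂m0)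
        = ∫⁻ t, ∫⁻ v, (if t < c then Jk m t v * Gk b v else 0) ∂m0 ∂m0 := by
      apply cong_m0
      intro t ht
      have hid : {y : Fin (b+3+m) → ℝ | Fin.cons t y ∈ Tset b (m+1) c} =
          {y : Fin (b+3+m) → ℝ | t < c ∧ y ∈ Tset b m t} := rfl
      rw [hid]
      by_cases h : t < c
      · have : {y : Fin (b+3+m) → ℝ | t < c ∧ y ∈ Tset b m t} = Tset b m t := by
          ext y; simp [h]
        rw [this, Tval b m t ht]
        simp only [h, if_true]
      · have : {y : Fin (b+3+m) → ℝ | t < c ∧ y ∈ Tset b m t} = ∅ := by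
          ext y; simp [h]
        rw [this]
        simp [h]
    refine step1.trans ?_
    clear step1
    have hmeasF : Measurable (Function.uncurry fun t v =>
        (if t < c then Jk m t v * Gk b v else 0)) := by
      refine Measurable.ite (measurableSet_lt measurable_fst measurable_const) ?_ measurable_const
      exact (Jk_measurable_pair m).mul ((Gk_measurable b).comp measurable_snd)
    rw [lintegral_lintegral_swap hmeasF.aemeasurable]
    apply cong_m0
    intro v hv
    have hpt : ∀ t : ℝ, (if t < c then Jk m t v * Gk b v else 0) =
        (if v < t ∧ t < c then ENNReal.ofReal ((t-v)^m / (m.factorial : ℝ)) else 0) * Gk b v := by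
      intro t
      by_cases h1 : t < c <;> by_cases h2 : v < t <;>
        simp [Jk, h1, h2]
    simp only [hpt]
    rw [lintegral_mul_const _ (by
      refine Measurable.ite ?_ ?_ measurable_const
      · exact (measurableSet_lt measurable_const measurable_id).inter
          (measurableSet_lt measurable_id measurable_const)
      · exact ENNReal.measurable_ofReal.comp (by fun_prop))]
    rw [inner_step m hc hv]

/-! ### Membership characterizations -/

lemma mem_Cset : ∀ (r : ℕ) (v : ℝ) (x : ℕ → ℝ),
    (proj (r+2) x ∈ Cset r v) ↔
      (v < x 0 ∧ (∀ j, j < r → x j < x (j+1)) ∧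
       (if r = 0 then v else x (r-1)) < x (r+1) ∧ x (r+1) < x r)
  | 0 => by
    intro v x
    show (v < x 0 ∧ v < x 1 ∧ x 1 < x 0) ↔ _
    simp only [if_pos rfl]
    constructor
    · rintro ⟨h1, h2, h3⟩
      exact ⟨h1, fun j hj => absurd hj (by omega), h2, h3⟩
    · rintro ⟨h1, _, h2, h3⟩
      exact ⟨h1, h2, h3⟩
  | (r+1) => by
    intro v x
    show (v < x 0 ∧ Fin.tail (proj (r+3) x) ∈ Cset r (x 0)) ↔ _
    have htail : Fin.tail (proj (r+3) x) = proj (r+2) (fun j => x (j+1)) := rfl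
    rw [htail, mem_Cset r (x 0) (fun j => x (j+1))]
    simp only [if_neg (Nat.succ_ne_zero r), Nat.add_sub_cancel]
    constructor
    · rintro ⟨h0, h1, h2, h3, h4⟩
      refine ⟨h0, ?_, ?_, ?_⟩
      · intro j hj
        cases j with
        | zero => exact h1
        | succ k => exact h2 k (by omega)
      · by_cases hr : r = 0
        · subst hr
          simpa using h3
        · rw [if_neg hr] at h3
          have : r - 1 + 1 = r := by omega
          rwa [this] at h3
      · exact h4
    · rintro ⟨h0, h1, h2, h3⟩
      refine ⟨h0, h1 0 (by omega), fun k hk => h1 (k+1) (by omega), ?_, h3⟩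
      by_cases hr : r = 0
      · subst hr
        simpa using h2
      · rw [if_neg hr]
        have : r - 1 + 1 = r := by omega
        rwa [this]

lemma mem_Tset (b : ℕ) : ∀ (m : ℕ) (c : ℝ) (x : ℕ → ℝ),
    (proj (b+3+m) x ∈ Tset b m c) ↔
      (x 0 < c ∧ (∀ j, j < m → x (j+1) < x j) ∧
       (∀ j, m ≤ j → j ≤ m + b → x j < x (j+1)) ∧
       x (m+b) < x (m+b+2) ∧ x (m+b+2) < x (m+b+1))
  | 0 => by
    intro c x
    show (x 0 < c ∧ Fin.tail (proj (b+3) x) ∈ Cset b (x 0)) ↔ _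
    have htail : Fin.tail (proj (b+3) x) = proj (b+2) (fun j => x (j+1)) := rfl
    rw [htail, mem_Cset b (x 0) (fun j => x (j+1))]
    have hifeq : (if b = 0 then x 0 else (fun j => x (j+1)) (b-1)) = x b := by
      split_ifs with h
      · rw [h]
      · show x (b - 1 + 1) = x b
        congr 1
        omega
    rw [hifeq]
    constructor
    · rintro ⟨h0, h1, h2, h3, h4⟩
      refine ⟨h0, fun j hj => absurd hj (by omega), ?_, ?_, ?_⟩
      · intro j _ hj2
        cases j with
        | zero => exact h1
        | succ k => exact h2 k (by omega)
      · simpa using h3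
      · simpa using h4
    · rintro ⟨h0, _, h2, h3, h4⟩
      refine ⟨h0, h2 0 (by omega) (by omega), fun k hk => h2 (k+1) (by omega) (by omega),
        by simpa using h3, by simpa using h4⟩
  | (m+1) => by
    intro c x
    show (x 0 < c ∧ Fin.tail (proj (b+3+m+1) x) ∈ Tset b m (x 0)) ↔ _
    have htail : Fin.tail (proj (b+3+m+1) x) = proj (b+3+m) (fun j => x (j+1)) := rfl
    rw [htail, mem_Tset b m (x 0) (fun j => x (j+1))]
    constructor
    · rintro ⟨h0, h1, h2, h3, h4, h5⟩
      refine ⟨h0, ?_, ?_, ?_, ?_⟩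
      · intro j hj
        cases j with
        | zero => exact h1
        | succ k => exact h2 k (by omega)
      · intro j hj1 hj2
        have hj' : j - 1 + 1 = j := by omega
        have := h3 (j-1) (by omega) (by omega)
        simpa [hj'] using this
      · convert h4 using 2 <;> omega
      · convert h5 using 2 <;> omega
    · rintro ⟨h0, h1, h2, h3, h4⟩
      refine ⟨h0, h1 0 (by omega), fun k hk => h1 (k+1) (by omega), ?_, ?_, ?_⟩
      · intro j hj1 hj2
        exact h2 (j+1) (by omega) (by omega)
      · convert h3 using 2 <;> omega
      · convert h4 using 2 <;> omega

/-! ### The decomposition by first peak -/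

def Aev (m b : ℕ) : Set (ℕ → ℝ) := proj (b+3+m) ⁻¹' Tset b m 1

lemma mem_Aev (m b : ℕ) (x : ℕ → ℝ) :
    x ∈ Aev m b ↔
      (x 0 < 1 ∧ (∀ j, j < m → x (j+1) < x j) ∧
       (∀ j, m ≤ j → j ≤ m + b → x j < x (j+1)) ∧
       x (m+b) < x (m+b+2) ∧ x (m+b+2) < x (m+b+1)) :=
  mem_Tset b m 1 x

lemma Aev_meas (m b : ℕ) : MeasurableSet (Aev m b) :=
  measurable_proj _ (Tset_meas b m 1)

lemma Aev_disj : Pairwise (Function.onFun Disjoint (fun p : ℕ × ℕ => Aev p.1 p.2)) := by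
  rintro ⟨m, b⟩ ⟨m', b'⟩ hne
  rw [Function.onFun, Set.disjoint_left]
  intro x hx hx'
  rw [mem_Aev] at hx hx'
  obtain ⟨_, hdec, hinc, hp1, hp2⟩ := hx
  obtain ⟨_, hdec', hinc', hp1', hp2'⟩ := hx'
  rcases Nat.lt_trichotomy m m' with hmm | hmm | hmm
  · have h1 := hinc m (le_refl m) (by omega)
    have h2 := hdec' m hmm
    linarith
  · subst hmm
    have hbb : b ≠ b' := by
      intro h
      exact hne (by rw [h])
    rcases Nat.lt_trichotomy b b' with hb | hb | hb
    · have h1 := hinc' (m+b+1) (by omega) (by omega)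
      linarith
    · exact hbb hb
    · have h1 := hinc (m+b'+1) (by omega) (by omega)
      linarith
  · have h1 := hinc' m' (le_refl m') (by omega)
    have h2 := hdec m' hmm
    linarith

lemma decomp_sub (h0 : σ 0 = 0) (h1 : σ 1 = 2) (h2 : σ 2 = 1)
    (k0 : τ 0 = 1) (k1 : τ 1 = 2) (k2 : τ 2 = 0) (x : ℕ → ℝ)
    (hdist : ∀ i j : ℕ, i ≠ j → x i ≠ x j)
    (hx0 : x 0 < 1)
    (hsig : ∃ i, OccursAt σ x i) (htau : ∃ i, OccursAt τ x i)
    (hlt : hitTime σ x < hitTime τ x) :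
    ∃ m b, x ∈ Aev m b := by
  obtain ⟨iσ, hiσ⟩ := hsig
  obtain ⟨iτ, hiτ⟩ := htau
  have hneσ : {j : ℕ | 3 ≤ j ∧ OccursAt σ x (j - 3)}.Nonempty :=
    ⟨iσ + 3, by omega, by rwa [Nat.add_sub_cancel]⟩
  have hneτ : {j : ℕ | 3 ≤ j ∧ OccursAt τ x (j - 3)}.Nonempty :=
    ⟨iτ + 3, by omega, by rwa [Nat.add_sub_cancel]⟩
  have hmemσ := Nat.sInf_mem hneσ
  have hmemτ := Nat.sInf_mem hneτ
  set jσ := hitTime σ x with hjσ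
  set jτ := hitTime τ x with hjτ
  have hmemσ' : 3 ≤ jσ ∧ OccursAt σ x (jσ - 3) := hmemσ
  have hmemτ' : 3 ≤ jτ ∧ OccursAt τ x (jτ - 3) := hmemτ
  set i0 := jσ - 3 with hi0
  have hjσ3 : jσ = i0 + 3 := by omega
  have hjσdef : jσ = sInf {j : ℕ | 3 ≤ j ∧ OccursAt σ x (j - 3)} := rfl
  have hjτdef : jτ = sInf {j : ℕ | 3 ≤ j ∧ OccursAt τ x (j - 3)} := rfl
  -- no τ occurrence at any i ≤ i0
  have noτ : ∀ i ≤ i0, ¬ OccursAt τ x i := by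
    intro i hi hocc
    have hmem : (i + 3) ∈ {j : ℕ | 3 ≤ j ∧ OccursAt τ x (j - 3)} :=
      ⟨by omega, by rwa [Nat.add_sub_cancel]⟩
    have h5 := Nat.sInf_le hmem
    rw [← hjτdef] at h5
    omega
  -- no σ occurrence at any i < i0
  have noσ : ∀ i < i0, ¬ OccursAt σ x i := by
    intro i hi hocc
    have hmem : (i + 3) ∈ {j : ℕ | 3 ≤ j ∧ OccursAt σ x (j - 3)} :=
      ⟨by omega, by rwa [Nat.add_sub_cancel]⟩
    have h5 := Nat.sInf_le hmem
    rw [← hjσdef] at h5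
    omega
  have nopeak : ∀ i < i0, ¬ (x i < x (i+1) ∧ x (i+2) < x (i+1)) := by
    rintro i hi ⟨hA, hB⟩
    have hne2 : x i ≠ x (i+2) := hdist i (i+2) (by omega)
    rcases lt_or_gt_of_ne hne2 with hlt2 | hgt2
    · exact noσ i hi ((occ132 h0 h1 h2 x i).mpr ⟨hlt2, hB⟩)
    · exact noτ i (le_of_lt hi) ((occ231 k0 k1 k2 x i).mpr ⟨hgt2, hA⟩)
  have hocc0 := (occ132 h0 h1 h2 x i0).mp hmemσ'.2
  have hx01 : x i0 < x (i0 + 1) := lt_trans hocc0.1 hocc0.2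
  have hned : {j : ℕ | x j < x (j+1)}.Nonempty := ⟨i0, hx01⟩
  set d := sInf {j : ℕ | x j < x (j+1)} with hdd
  have hd : x d < x (d+1) := Nat.sInf_mem hned
  have hdle : d ≤ i0 := Nat.sInf_le hx01
  have hdec : ∀ j < d, x (j+1) < x j := by
    intro j hj
    have hnm : j ∉ {j : ℕ | x j < x (j+1)} := Nat.notMem_of_lt_sInf hj
    have := hdist j (j+1) (by omega)
    rcases lt_or_gt_of_ne this with h | h
    · exact absurd h hnm
    · exact h
  have hinc : ∀ j, d ≤ j → j ≤ i0 → x j < x (j+1) := by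
    intro j hj
    induction j, hj using Nat.le_induction with
    | base => intro _; exact hd
    | succ j hj IH =>
      intro hj1
      have hxj := IH (by omega)
      have hnp := nopeak j (by omega)
      have hne2 := hdist (j+1) (j+2) (by omega)
      rcases lt_or_gt_of_ne hne2 with h | h
      · exact h
      · exact absurd ⟨hxj, h⟩ hnp
  refine ⟨d, i0 - d, ?_⟩
  rw [mem_Aev]
  have hdb : d + (i0 - d) = i0 := by omega
  refine ⟨?_, hdec, ?_, ?_, ?_⟩
  · -- x 0 < 1
    exact hx0
  · intro j hj1 hj2
    exact hinc j hj1 (by omega)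
  · rw [hdb]; exact hocc0.1
  · rw [hdb]; exact hocc0.2

lemma sub_decomp (h0 : σ 0 = 0) (h1 : σ 1 = 2) (h2 : σ 2 = 1)
    (k0 : τ 0 = 1) (k1 : τ 1 = 2) (k2 : τ 2 = 0) (x : ℕ → ℝ)
    (htau : ∃ i, OccursAt τ x i) (m b : ℕ) (hx : x ∈ Aev m b) :
    hitTime σ x < hitTime τ x := by
  rw [mem_Aev] at hx
  obtain ⟨_, hdec, hinc, hp1, hp2⟩ := hx
  set i0 := m + b with hi0def
  have hoccσ : OccursAt σ x i0 := (occ132 h0 h1 h2 x i0).mpr ⟨hp1, hp2⟩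
  have hσle : hitTime σ x ≤ i0 + 3 :=
    Nat.sInf_le ⟨by omega, by rwa [Nat.add_sub_cancel]⟩
  have noτ : ∀ i ≤ i0, ¬ OccursAt τ x i := by
    intro i hi hocc
    obtain ⟨hA, hB⟩ := (occ231 k0 k1 k2 x i).mp hocc
    rcases Nat.lt_or_ge i m with him | him
    · exact absurd hB (not_lt.mpr (le_of_lt (hdec i him)))
    · rcases Nat.eq_or_lt_of_le hi with heq | hlt2
      · subst heq
        linarith [hp1]
      · have := hinc (i+1) (by omega) (by omega)
        linarith
  obtain ⟨iτ, hiτ⟩ := htau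
  have hneτ : {j : ℕ | 3 ≤ j ∧ OccursAt τ x (j - 3)}.Nonempty :=
    ⟨iτ + 3, by omega, by rwa [Nat.add_sub_cancel]⟩
  have hmemτ : 3 ≤ hitTime τ x ∧ OccursAt τ x (hitTime τ x - 3) := Nat.sInf_mem hneτ
  by_contra hcon
  push_neg at hcon
  have hτle : hitTime τ x ≤ i0 + 3 := le_trans hcon hσle
  exact noτ (hitTime τ x - 3) (by omega) hmemτ.2

/-! ### Summation of the series -/

lemma real_exp_tsum (x : ℝ) : Real.exp x = ∑' n : ℕ, x ^ n / (n.factorial : ℝ) := by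
  rw [Real.exp_eq_exp_ℝ, NormedSpace.exp_eq_tsum_div]

lemma Jk_measurable (m : ℕ) (c : ℝ) : Measurable (Jk m c) := by
  unfold Jk
  refine Measurable.ite (measurableSet_lt measurable_id measurable_const) ?_ measurable_const
  exact ENNReal.measurable_ofReal.comp (by fun_prop)

lemma tsum_pair {v : ℝ} (hv : v ∈ Set.Icc (0:ℝ) 1) :
    (∑' p : ℕ × ℕ, Jk p.1 1 v * Gk p.2 v) =
      ENNReal.ofReal (Real.exp (1-v) * (Real.exp (1-v) - 1 - (1-v))) := by
  by_cases hv1 : v < 1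
  · have hx0 : (0:ℝ) ≤ 1 - v := by linarith
    have hsum : Summable (fun n : ℕ => (1-v)^n / (n.factorial : ℝ)) :=
      Real.summable_pow_div_factorial (1-v)
    have hJs : (∑' m : ℕ, Jk m 1 v) = ENNReal.ofReal (Real.exp (1-v)) := by
      have : ∀ m : ℕ, Jk m 1 v = ENNReal.ofReal ((1-v)^m / (m.factorial : ℝ)) := by
        intro m; simp [Jk, hv1]
      rw [tsum_congr this, ← ENNReal.ofReal_tsum_of_nonneg
        (fun m => by positivity) hsum, ← real_exp_tsum]
    have hGs : (∑' b : ℕ, Gk b v) = ENNReal.ofReal (Real.exp (1-v) - 1 - (1-v)) := by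
      unfold Gk
      rw [← ENNReal.ofReal_tsum_of_nonneg (fun b => by positivity)
        ((summable_nat_add_iff 2).mpr hsum)]
      congr 1
      have hkey := Summable.sum_add_tsum_nat_add (f := fun n : ℕ => (1-v)^n / (n.factorial : ℝ)) 2 hsum
      rw [← real_exp_tsum] at hkey
      have hrange : (∑ i ∈ Finset.range 2, (1-v)^i / (i.factorial : ℝ)) = 1 + (1-v) := by
        simp [Finset.sum_range_succ]
      rw [hrange] at hkey
      linarith
    calc (∑' p : ℕ × ℕ, Jk p.1 1 v * Gk p.2 v)
        = ∑' m : ℕ, ∑' b : ℕ, Jk m 1 v * Gk b v := ENNReal.tsum_prod (f := fun m b => Jk m 1 v * Gk b v)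
      _ = ∑' m : ℕ, Jk m 1 v * ∑' b : ℕ, Gk b v :=
          tsum_congr fun m => ENNReal.tsum_mul_left
      _ = (∑' m : ℕ, Jk m 1 v) * ∑' b : ℕ, Gk b v := ENNReal.tsum_mul_right
      _ = ENNReal.ofReal (Real.exp (1-v) * (Real.exp (1-v) - 1 - (1-v))) := by
          rw [hJs, hGs, ← ENNReal.ofReal_mul (Real.exp_nonneg _)]
  · have hveq : v = 1 := le_antisymm hv.2 (not_lt.mp hv1)
    subst hveq
    have hJ0 : ∀ m : ℕ, Jk m 1 1 = 0 := by
      intro m; simp [Jk]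
    simp only [hJ0, zero_mul, tsum_zero]
    norm_num

lemma final_integral :
    (∫ v in (0:ℝ)..1, Real.exp (1-v) * (Real.exp (1-v) - 1 - (1-v))) =
      (Real.exp 1 ^ 2 - 2 * Real.exp 1 - 1) / 2 := by
  have hder : ∀ v ∈ Set.uIcc (0:ℝ) 1, HasDerivAt
      (fun v : ℝ => -(Real.exp (2*(1-v))/2) + (1-v)*Real.exp (1-v))
      (Real.exp (1-v) * (Real.exp (1-v) - 1 - (1-v))) v := by
    intro v _
    have h1 : HasDerivAt (fun v : ℝ => 1 - v) (-1) v := (hasDerivAt_id v).const_sub 1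
    have hexp1 : HasDerivAt (fun v : ℝ => Real.exp (1-v)) (Real.exp (1-v) * (-1)) v := h1.exp
    have h2 : HasDerivAt (fun v : ℝ => 2*(1-v)) (2*(-1)) v := h1.const_mul 2
    have hexp2 : HasDerivAt (fun v : ℝ => Real.exp (2*(1-v)))
        (Real.exp (2*(1-v)) * (2*(-1))) v := h2.exp
    have h3 := ((hexp2.div_const 2).neg).add (h1.mul hexp1)
    refine h3.congr_deriv ?_
    have he2 : Real.exp (2*(1-v)) = Real.exp (1-v) * Real.exp (1-v) := by
      rw [two_mul, Real.exp_add]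
    rw [he2]
    ring
  rw [intervalIntegral.integral_eq_sub_of_hasDerivAt hder (by
    apply Continuous.intervalIntegrable
    continuity)]
  have he2 : Real.exp 2 = Real.exp 1 * Real.exp 1 := by
    rw [show (2:ℝ) = 1 + 1 by norm_num, Real.exp_add]
  norm_num
  rw [he2]
  ring

set_option maxHeartbeats 2000000 in
lemma U_measure {μ : Measure (ℕ → ℝ)} (hμ : IsIIDUniform μ) :
    μ (⋃ p : ℕ × ℕ, Aev p.1 p.2) =
      ENNReal.ofReal ((Real.exp 1 ^ 2 - 2 * Real.exp 1 - 1) / 2) := by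
  rw [measure_iUnion Aev_disj (fun p => Aev_meas p.1 p.2)]
  have h1 : ∀ p : ℕ × ℕ, μ (Aev p.1 p.2) = ∫⁻ v, Jk p.1 1 v * Gk p.2 v ∂m0 := by
    intro p
    rw [Aev, marginal hμ (Tset_meas _ _ _),
      Tval p.2 p.1 1 (Set.mem_Icc.mpr ⟨zero_le_one, le_refl 1⟩)]
  rw [tsum_congr h1, ← lintegral_tsum (μ := m0)
    (f := fun (p : ℕ × ℕ) (v : ℝ) => Jk p.1 1 v * Gk p.2 v)
    (fun p => ((Jk_measurable p.1 1).mul (Gk_measurable p.2)).aemeasurable)]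
  rw [cong_m0 (fun v hv => tsum_pair hv)]
  have hFc : Continuous (fun v : ℝ => Real.exp (1-v) * (Real.exp (1-v) - 1 - (1-v))) := by
    continuity
  have hF0 : ∀ v ∈ Set.Icc (0:ℝ) 1,
      0 ≤ Real.exp (1-v) * (Real.exp (1-v) - 1 - (1-v)) := by
    intro v hv
    have h1 : (1-v) + 1 ≤ Real.exp (1-v) := Real.add_one_le_exp (1-v)
    have := Real.exp_nonneg (1-v)
    nlinarith
  rw [m0, ← ofReal_integral_eq_lintegral_ofReal (hFc.integrableOn_Icc)
    ((ae_restrict_iff' measurableSet_Icc).mpr (Filter.Eventually.of_forall hF0))]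
  rw [MeasureTheory.integral_Icc_eq_integral_Ioc,
    ← intervalIntegral.integral_of_le zero_le_one, final_integral]

end P132

theorem prob_132_before_231 (μ : Measure (ℕ → ℝ)) (hμ : IsIIDUniform μ)
    (σ τ : Equiv.Perm (Fin 3))
    (hσ : σ 0 = 0 ∧ σ 1 = 2 ∧ σ 2 = 1)
    (hτ : τ 0 = 1 ∧ τ 1 = 2 ∧ τ 2 = 0) :
    (μ {x | hitTime σ x < hitTime τ x}).toReal =
      (Real.exp 1 ^ 2 - 2 * Real.exp 1 - 1) / 2 := by
  obtain ⟨h0, h1, h2⟩ := hσ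
  obtain ⟨k0, k1, k2⟩ := hτ
  classical
  set Nset : Set (ℕ → ℝ) :=
    ({x | ∃ i j : ℕ, i ≠ j ∧ x i = x j} ∪ {x | ∀ i, ¬ OccursAt σ x i}) ∪
    ({x | ∀ i, ¬ OccursAt τ x i} ∪ {x | 1 ≤ x 0}) with hN
  have hN0 : μ Nset = 0 :=
    measure_union_null
      (measure_union_null (P132.ties_null hμ) (P132.noSigma_null hμ h0 h1 h2))
      (measure_union_null (P132.noTau_null hμ k0 k1 k2) (P132.x0_null hμ))
  set U := ⋃ p : ℕ × ℕ, P132.Aev p.1 p.2 with hU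
  have hEU : {x : ℕ → ℝ | hitTime σ x < hitTime τ x} ⊆ U ∪ Nset := by
    intro x hx
    by_cases hxN : x ∈ Nset
    · exact Or.inr hxN
    · left
      rw [hN] at hxN
      simp only [Set.mem_union, not_or, Set.mem_setOf_eq] at hxN
      obtain ⟨⟨hties, hnoσ⟩, hnoτ, hx0⟩ := hxN
      push_neg at hnoσ hnoτ
      obtain ⟨m, b, hm⟩ := P132.decomp_sub h0 h1 h2 k0 k1 k2 x
        (fun i j hij heq => hties ⟨i, j, hij, heq⟩) (not_le.mp hx0)
        hnoσ hnoτ hx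
      exact Set.mem_iUnion.mpr ⟨(m, b), hm⟩
  have hUE : U ⊆ {x : ℕ → ℝ | hitTime σ x < hitTime τ x} ∪ Nset := by
    intro x hx
    by_cases hxN : x ∈ Nset
    · exact Or.inr hxN
    · left
      rw [hN] at hxN
      simp only [Set.mem_union, not_or, Set.mem_setOf_eq] at hxN
      obtain ⟨⟨_, _⟩, hnoτ, _⟩ := hxN
      push_neg at hnoτ
      obtain ⟨p, hp⟩ := Set.mem_iUnion.mp hx
      exact P132.sub_decomp h0 h1 h2 k0 k1 k2 x hnoτ p.1 p.2 hp
  have hEq : μ {x : ℕ → ℝ | hitTime σ x < hitTime τ x} = μ U := by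
    apply le_antisymm
    · calc μ {x : ℕ → ℝ | hitTime σ x < hitTime τ x}
          ≤ μ (U ∪ Nset) := measure_mono hEU
        _ ≤ μ U + μ Nset := measure_union_le _ _
        _ = μ U := by rw [hN0, add_zero]
    · calc μ U
          ≤ μ ({x : ℕ → ℝ | hitTime σ x < hitTime τ x} ∪ Nset) := measure_mono hUE
        _ ≤ μ {x : ℕ → ℝ | hitTime σ x < hitTime τ x} + μ Nset := measure_union_le _ _
        _ = μ {x : ℕ → ℝ | hitTime σ x < hitTime τ x} := by rw [hN0, add_zero]
  rw [hEq, hU, P132.U_measure hμ,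
    ENNReal.toReal_ofReal (by nlinarith [Real.exp_one_gt_d9])]


end
end

section
/- For n ≥ 3, let b_n be the number of permutations π ∈ S_n that have no consecutive occurrence of 123 and no consecutive occurrence of 213, and satisfy st(π_{n−2}π_{n−1}π_n) = 312; set b_0 = b_1 = b_2 = 0. Then b_3 = 1, b_4 = 4, and for all n ≥ 5, b_n = b_{n−1} + (n−1)·b_{n−2}. -/
open MeasureTheory ProbabilityTheory Real

noncomputable section

/-- value of permutation at nat index, 0 out of range -/
def pv {n : ℕ} (p : Equiv.Perm (Fin n)) (j : ℕ) : ℕ :=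
  if h : j < n then (p ⟨j, h⟩ : ℕ) else 0

lemma pv_eq {n : ℕ} (p : Equiv.Perm (Fin n)) {j : ℕ} (h : j < n) :
    pv p j = (p ⟨j, h⟩ : ℕ) := dif_pos h

lemma pv_lt_pv_iff {n : ℕ} (p : Equiv.Perm (Fin n)) {j1 j2 : ℕ} (h1 : j1 < n) (h2 : j2 < n) :
    pv p j1 < pv p j2 ↔ p ⟨j1, h1⟩ < p ⟨j2, h2⟩ := by
  rw [pv_eq p h1, pv_eq p h2]; exact Iff.symm Fin.lt_def

lemma pv_lt {n : ℕ} (p : Equiv.Perm (Fin n)) (j : ℕ) (hn : 0 < n) : pv p j < n := by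
  unfold pv; split
  · exact (p _).isLt
  · exact hn

lemma pv_ne {n : ℕ} (p : Equiv.Perm (Fin n)) {j1 j2 : ℕ} (h1 : j1 < n) (h2 : j2 < n)
    (h : j1 ≠ j2) : pv p j1 ≠ pv p j2 := by
  rw [pv_eq p h1, pv_eq p h2]
  intro hc
  exact h (by simpa [Fin.ext_iff] using p.injective (Fin.val_injective hc))

def GoodC (k : ℕ) (p : Equiv.Perm (Fin (k+3))) : Prop :=
  (∀ i : Fin (k+1), pv p ((i:ℕ)+2) < pv p (i:ℕ) ∨ pv p ((i:ℕ)+2) < pv p ((i:ℕ)+1)) ∧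
  pv p (k+1) < pv p (k+2) ∧ pv p (k+2) < pv p k

instance GoodC.dec (k : ℕ) : DecidablePred (GoodC k) := fun p => by unfold GoodC; infer_instance

def B (k : ℕ) : ℕ := Nat.card {p : Equiv.Perm (Fin (k+3)) // GoodC k p}

lemma occ_iff' {n : ℕ} (σ : Equiv.Perm (Fin 3)) (p : Equiv.Perm (Fin n)) (i : ℕ)
    (x y z : Fin 3) (hcov : ∀ a : Fin 3, a = x ∨ a = y ∨ a = z)
    (h1 : σ x < σ y) (h2 : σ y < σ z) :
    PermOccursAt σ p i ↔
      i + 3 ≤ n ∧ pv p (i + (x:ℕ)) < pv p (i + (y:ℕ)) ∧ pv p (i + (y:ℕ)) < pv p (i + (z:ℕ)) := by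
  have hx := x.isLt; have hy := y.isLt; have hz := z.isLt
  constructor
  · rintro ⟨h, hp⟩
    exact ⟨h, (pv_lt_pv_iff p (by omega) (by omega)).mpr ((hp x y).mpr h1),
      (pv_lt_pv_iff p (by omega) (by omega)).mpr ((hp y z).mpr h2)⟩
  · rintro ⟨h, c1, c2⟩
    have hxy : (p ⟨i + (x:ℕ), by omega⟩ : Fin n) < p ⟨i + (y:ℕ), by omega⟩ :=
      (pv_lt_pv_iff p (by omega) (by omega)).mp c1
    have hyz : (p ⟨i + (y:ℕ), by omega⟩ : Fin n) < p ⟨i + (z:ℕ), by omega⟩ :=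
      (pv_lt_pv_iff p (by omega) (by omega)).mp c2
    refine ⟨h, ?_⟩
    intro a b
    rcases hcov a with rfl | rfl | rfl <;> rcases hcov b with rfl | rfl | rfl <;>
      first
        | exact iff_of_false (lt_irrefl _) (lt_irrefl _)
        | exact iff_of_true hxy h1
        | exact iff_of_true hyz h2
        | exact iff_of_true (hxy.trans hyz) (h1.trans h2)
        | exact iff_of_false (asymm hxy) (asymm h1)
        | exact iff_of_false (asymm hyz) (asymm h2)
        | exact iff_of_false (asymm (hxy.trans hyz)) (asymm (h1.trans h2))

section patterns
variable {σ123 σ213 σ312 : Equiv.Perm (Fin 3)}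
variable (g123 : σ123 0 = 0 ∧ σ123 1 = 1 ∧ σ123 2 = 2)
variable (g213 : σ213 0 = 1 ∧ σ213 1 = 0 ∧ σ213 2 = 2)
variable (g312 : σ312 0 = 2 ∧ σ312 1 = 0 ∧ σ312 2 = 1)
include g123 in
lemma occ123_iff {n : ℕ} (p : Equiv.Perm (Fin n)) (i : ℕ) :
    PermOccursAt σ123 p i ↔
      i + 3 ≤ n ∧ pv p i < pv p (i+1) ∧ pv p (i+1) < pv p (i+2) := by
  have := occ_iff' σ123 p i 0 1 2 (by decide)
    (by rw [g123.1, g123.2.1]; decide) (by rw [g123.2.1, g123.2.2]; decide)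
  simpa using this

include g213 in
lemma occ213_iff {n : ℕ} (p : Equiv.Perm (Fin n)) (i : ℕ) :
    PermOccursAt σ213 p i ↔
      i + 3 ≤ n ∧ pv p (i+1) < pv p i ∧ pv p i < pv p (i+2) := by
  have := occ_iff' σ213 p i 1 0 2 (by decide)
    (by rw [g213.1, g213.2.1]; decide) (by rw [g213.1, g213.2.2]; decide)
  simpa using this

include g312 in
lemma occ312_iff {n : ℕ} (p : Equiv.Perm (Fin n)) (i : ℕ) :
    PermOccursAt σ312 p i ↔
      i + 3 ≤ n ∧ pv p (i+1) < pv p (i+2) ∧ pv p (i+2) < pv p i := by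
  have := occ_iff' σ312 p i 1 2 0 (by decide)
    (by rw [g312.2.1, g312.2.2]; decide) (by rw [g312.2.2, g312.1]; decide)
  simpa using this

include g123 g213 g312 in
lemma cond_iff (k : ℕ) (p : Equiv.Perm (Fin (k+3))) :
    ((∀ i, ¬ PermOccursAt σ123 p i) ∧ (∀ i, ¬ PermOccursAt σ213 p i) ∧
      PermOccursAt σ312 p k) ↔ GoodC k p := by
  constructor
  · rintro ⟨hA, hB, hE⟩
    refine ⟨?_, ?_⟩
    · intro i
      have hi := i.isLt
      have n1 := (occ123_iff g123 p (i:ℕ)).not.mp (hA (i:ℕ))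
      have n2 := (occ213_iff g213 p (i:ℕ)).not.mp (hB (i:ℕ))
      have d1 := pv_ne p (show (i:ℕ) < k+3 by omega) (show (i:ℕ)+1 < k+3 by omega) (by omega)
      have d2 := pv_ne p (show (i:ℕ) < k+3 by omega) (show (i:ℕ)+2 < k+3 by omega) (by omega)
      have d3 := pv_ne p (show (i:ℕ)+1 < k+3 by omega) (show (i:ℕ)+2 < k+3 by omega) (by omega)
      omega
    · have := (occ312_iff g312 p k).mp hE
      exact ⟨this.2.1, this.2.2⟩
  · rintro ⟨hw, he1, he2⟩
    refine ⟨?_, ?_, ?_⟩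
    · intro i hocc
      obtain ⟨hb, c1, c2⟩ := (occ123_iff g123 p i).mp hocc
      have hw' : pv p (i+2) < pv p i ∨ pv p (i+2) < pv p (i+1) := hw ⟨i, by omega⟩
      omega
    · intro i hocc
      obtain ⟨hb, c1, c2⟩ := (occ213_iff g213 p i).mp hocc
      have hw' : pv p (i+2) < pv p i ∨ pv p (i+2) < pv p (i+1) := hw ⟨i, by omega⟩
      omega
    · exact (occ312_iff g312 p k).mpr ⟨by omega, he1, he2⟩

end patterns

lemma B0 : B 0 = 1 := by
  rw [B, Nat.card_eq_fintype_card]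
  decide

lemma B1 : B 1 = 4 := by
  rw [B, Nat.card_eq_fintype_card]
  decide


def Phi {m : ℕ} (q : Equiv.Perm (Fin m)) : Equiv.Perm (Fin (m+1)) :=
  (finSuccEquiv m).trans ((q.optionCongr).trans (finSuccEquiv' (Fin.last m)).symm)

lemma Phi_zero {m : ℕ} (q : Equiv.Perm (Fin m)) : Phi q 0 = Fin.last m := by
  simp [Phi]

lemma Phi_succ {m : ℕ} (q : Equiv.Perm (Fin m)) (i : Fin m) :
    Phi q i.succ = (q i).castSucc := by
  simp [Phi, Fin.succAbove_last]

lemma pv_Phi_zero {m : ℕ} (q : Equiv.Perm (Fin m)) : pv (Phi q) 0 = m := by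
  rw [pv_eq _ (Nat.succ_pos m)]
  have e : (⟨0, Nat.succ_pos m⟩ : Fin (m+1)) = (0 : Fin (m+1)) := by ext; simp
  rw [e, Phi_zero]
  simp

lemma pv_Phi_succ {m : ℕ} (q : Equiv.Perm (Fin m)) (j : ℕ) :
    pv (Phi q) (j+1) = pv q j := by
  by_cases h : j < m
  · rw [pv_eq _ (show j+1 < m+1 by omega), pv_eq _ h]
    have e : (⟨j+1, show j+1 < m+1 by omega⟩ : Fin (m+1)) = (⟨j, h⟩ : Fin m).succ := rfl
    rw [e, Phi_succ]
    simp
  · unfold pv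
    rw [dif_neg (by omega), dif_neg h]

lemma GoodPhi {k : ℕ} (q : Equiv.Perm (Fin (k+4))) :
    GoodC (k+2) (Phi q) ↔ GoodC (k+1) q := by
  have hz : pv (Phi q) 0 = k+4 := pv_Phi_zero q
  have hs : ∀ j : ℕ, 1 ≤ j → pv (Phi q) j = pv q (j-1) := by
    intro j hj
    have h := pv_Phi_succ q (j-1)
    rw [show j-1+1 = j from by omega] at h
    exact h
  have a1 : pv (Phi q) (k+2+1) = pv q (k+1+1) := by
    rw [hs (k+2+1) (by omega), show k+2+1-1 = k+1+1 from by omega]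
  have a2 : pv (Phi q) (k+2+2) = pv q (k+1+2) := by
    rw [hs (k+2+2) (by omega), show k+2+2-1 = k+1+2 from by omega]
  have a3 : pv (Phi q) (k+2) = pv q (k+1) := by
    rw [hs (k+2) (by omega), show k+2-1 = k+1 from by omega]
  have wcorr : ∀ t : ℕ,
      (pv (Phi q) (t+1+2) < pv (Phi q) (t+1) ∨ pv (Phi q) (t+1+2) < pv (Phi q) (t+1+1)) ↔
      (pv q (t+2) < pv q t ∨ pv q (t+2) < pv q (t+1)) := by
    intro t
    have b1 : pv (Phi q) (t+1+2) = pv q (t+2) := by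
      rw [hs (t+1+2) (by omega), show t+1+2-1 = t+2 from by omega]
    have b2 : pv (Phi q) (t+1) = pv q t := by
      rw [hs (t+1) (by omega), show t+1-1 = t from by omega]
    have b3 : pv (Phi q) (t+1+1) = pv q (t+1) := by
      rw [hs (t+1+1) (by omega), show t+1+1-1 = t+1 from by omega]
    rw [b1, b2, b3]
  constructor
  · rintro ⟨hw, he1, he2⟩
    refine ⟨?_, ?_, ?_⟩
    · intro i
      have hi := i.isLt
      have h : pv (Phi q) ((i:ℕ)+1+2) < pv (Phi q) ((i:ℕ)+1) ∨
          pv (Phi q) ((i:ℕ)+1+2) < pv (Phi q) ((i:ℕ)+1+1) := hw ⟨(i:ℕ)+1, by omega⟩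
      exact (wcorr (i:ℕ)).mp h
    · rw [a1, a2] at he1
      exact he1
    · rw [a2, a3] at he2
      exact he2
  · rintro ⟨hw, he1, he2⟩
    refine ⟨?_, ?_, ?_⟩
    · intro i
      have hi := i.isLt
      rcases Nat.eq_zero_or_pos (i:ℕ) with h0 | hpos
      · rw [h0]
        left
        have b1 : pv (Phi q) (0+2) = pv q 1 := by
          rw [hs (0+2) (by omega)]
        rw [b1, hz]
        exact pv_lt q 1 (by omega)
      · obtain ⟨t, ht⟩ : ∃ t, (i:ℕ) = t+1 := ⟨(i:ℕ)-1, by omega⟩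
        rw [ht]
        exact (wcorr t).mpr (hw ⟨t, by omega⟩)
    · rw [a1, a2]
      exact he1
    · rw [a2, a3]
      exact he2


lemma cardA (k : ℕ) :
    Nat.card {p : Equiv.Perm (Fin (k+5)) // GoodC (k+2) p ∧ p 0 = Fin.last (k+4)}
      = B (k+1) := by
  let F : {q : Equiv.Perm (Fin (k+4)) // GoodC (k+1) q} →
      {p : Equiv.Perm (Fin (k+5)) // GoodC (k+2) p ∧ p 0 = Fin.last (k+4)} :=
    fun q => ⟨Phi q.1, (GoodPhi q.1).mpr q.2, Phi_zero q.1⟩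
  have Finj : Function.Injective F := by
    intro q q' h
    have h' : Phi q.1 = Phi q'.1 := congrArg Subtype.val h
    apply Subtype.ext
    apply Equiv.ext
    intro i
    have h2 : Phi q.1 i.succ = Phi q'.1 i.succ := by rw [h']
    rw [Phi_succ, Phi_succ] at h2
    exact Fin.castSucc_inj.mp h2
  have Fsurj : Function.Surjective F := by
    rintro ⟨p, hG, h0⟩
    have hne : ∀ i : Fin (k+4), p i.succ ≠ Fin.last (k+4) := by
      intro i hc
      exact Fin.succ_ne_zero i (p.injective (hc.trans h0.symm))
    have finj : Function.Injective (fun i : Fin (k+4) => (p i.succ).castPred (hne i)) := by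
      intro i j hij
      have h2 : p i.succ = p j.succ := by
        have h3 := congrArg Fin.castSucc hij
        rwa [Fin.castSucc_castPred, Fin.castSucc_castPred] at h3
      exact Fin.succ_injective _ (p.injective h2)
    let q : Equiv.Perm (Fin (k+4)) :=
      Equiv.ofBijective _ (Finite.injective_iff_bijective.mp finj)
    have hpq : Phi q = p := by
      apply Equiv.ext
      intro x
      induction x using Fin.cases with
      | zero => rw [Phi_zero, h0]
      | succ i =>
        rw [Phi_succ]
        show ((p i.succ).castPred (hne i)).castSucc = p i.succ
        rw [Fin.castSucc_castPred]
    exact ⟨⟨q, (GoodPhi q).mp (by rw [hpq]; exact hG)⟩, Subtype.ext hpq⟩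
  rw [B]
  exact (Nat.card_congr (Equiv.ofBijective F ⟨Finj, Fsurj⟩)).symm

def Psi {m : ℕ} (a : Fin (m+1)) (q : Equiv.Perm (Fin m)) : Equiv.Perm (Fin (m+2)) :=
  ((finSuccEquiv (m+1)).trans ((finSuccEquiv m).optionCongr)).trans
    (((q.optionCongr.optionCongr).trans (Equiv.swap none (some none))).trans
      (((finSuccEquiv' (Fin.last (m+1))).trans ((finSuccEquiv' a).optionCongr)).symm))

lemma Psi_zero {m : ℕ} (a : Fin (m+1)) (q : Equiv.Perm (Fin m)) :
    Psi a q 0 = a.castSucc := by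
  simp [Psi, Fin.succAbove_last, ← Equiv.optionCongr_symm]

lemma Psi_one {m : ℕ} (a : Fin (m+1)) (q : Equiv.Perm (Fin m)) :
    Psi a q 1 = Fin.last (m+1) := by
  have e1 : (finSuccEquiv (m+1)) 1 = some 0 := by
    rw [← Fin.succ_zero_eq_one, finSuccEquiv_succ]
  simp [Psi, e1, ← Equiv.optionCongr_symm]

lemma Psi_succsucc {m : ℕ} (a : Fin (m+1)) (q : Equiv.Perm (Fin m)) (i : Fin m) :
    Psi a q i.succ.succ = (a.succAbove (q i)).castSucc := by
  simp [Psi, Equiv.swap_apply_of_ne_of_ne, Fin.succAbove_last, ← Equiv.optionCongr_symm]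


def Lv (av v : ℕ) : ℕ := if v < av then v else v+1

lemma Lv_lt_iff (av u v : ℕ) : Lv av u < Lv av v ↔ u < v := by
  unfold Lv; split_ifs <;> omega

lemma Lv_lt_top (av v M : ℕ) (h : v < M) : Lv av v < M+1 := by
  unfold Lv; split_ifs <;> omega

lemma succAbove_val {m : ℕ} (a : Fin (m+1)) (u : Fin m) :
    ((a.succAbove u : Fin (m+1)) : ℕ) = Lv (a:ℕ) (u:ℕ) := by
  unfold Lv
  by_cases h : (u:ℕ) < (a:ℕ)
  · rw [Fin.succAbove_of_castSucc_lt a u (by rwa [Fin.lt_def, Fin.coe_castSucc]),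
      Fin.coe_castSucc, if_pos h]
  · rw [Fin.succAbove_of_le_castSucc a u (by rw [Fin.le_def, Fin.coe_castSucc]; omega),
      Fin.val_succ, if_neg h]

lemma pv_Psi_zero {m : ℕ} (a : Fin (m+1)) (q : Equiv.Perm (Fin m)) :
    pv (Psi a q) 0 = (a:ℕ) := by
  rw [pv_eq _ (show 0 < m+2 by omega)]
  have e : (⟨0, show 0 < m+2 by omega⟩ : Fin (m+2)) = (0 : Fin (m+2)) := by ext; simp
  rw [e, Psi_zero, Fin.coe_castSucc]

lemma pv_Psi_one {m : ℕ} (a : Fin (m+1)) (q : Equiv.Perm (Fin m)) :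
    pv (Psi a q) 1 = m+1 := by
  rw [pv_eq _ (show 1 < m+2 by omega)]
  have e : (⟨1, show 1 < m+2 by omega⟩ : Fin (m+2)) = (1 : Fin (m+2)) := by ext; simp
  rw [e, Psi_one, Fin.val_last]

lemma pv_Psi_two {m : ℕ} (a : Fin (m+1)) (q : Equiv.Perm (Fin m)) (j : ℕ)
    (h2 : 2 ≤ j) (h5 : j < m+2) :
    pv (Psi a q) j = Lv (a:ℕ) (pv q (j-2)) := by
  obtain ⟨t, rfl⟩ : ∃ t, j = t+2 := ⟨j-2, by omega⟩
  rw [pv_eq _ h5]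
  have e : (⟨t+2, h5⟩ : Fin (m+2)) = ((⟨t, by omega⟩ : Fin m).succ.succ) := rfl
  rw [e, Psi_succsucc, Fin.coe_castSucc, succAbove_val]
  rw [show t+2-2 = t from by omega, pv_eq q (show t < m by omega)]

lemma GoodPsi {k : ℕ} (a : Fin (k+4)) (q : Equiv.Perm (Fin (k+3))) :
    GoodC (k+2) (Psi a q) ↔ GoodC k q := by
  have hz : pv (Psi a q) 0 = (a:ℕ) := pv_Psi_zero a q
  have ho : pv (Psi a q) 1 = k+4 := pv_Psi_one a q
  have hs : ∀ j : ℕ, 2 ≤ j → j < k+5 → pv (Psi a q) j = Lv (a:ℕ) (pv q (j-2)) :=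
    pv_Psi_two a q
  have a1 : pv (Psi a q) (k+2+1) = Lv (a:ℕ) (pv q (k+1)) := by
    rw [hs (k+2+1) (by omega) (by omega), show k+2+1-2 = k+1 from by omega]
  have a2 : pv (Psi a q) (k+2+2) = Lv (a:ℕ) (pv q (k+2)) := by
    rw [hs (k+2+2) (by omega) (by omega), show k+2+2-2 = k+2 from by omega]
  have a3 : pv (Psi a q) (k+2) = Lv (a:ℕ) (pv q k) := by
    rw [hs (k+2) (by omega) (by omega), show k+2-2 = k from by omega]
  have wcorr : ∀ t : ℕ, t < k+1 →
      ((pv (Psi a q) (t+2+2) < pv (Psi a q) (t+2) ∨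
        pv (Psi a q) (t+2+2) < pv (Psi a q) (t+2+1)) ↔
        (pv q (t+2) < pv q t ∨ pv q (t+2) < pv q (t+1))) := by
    intro t ht
    have b1 : pv (Psi a q) (t+2+2) = Lv (a:ℕ) (pv q (t+2)) := by
      rw [hs (t+2+2) (by omega) (by omega), show t+2+2-2 = t+2 from by omega]
    have b2 : pv (Psi a q) (t+2) = Lv (a:ℕ) (pv q t) := by
      rw [hs (t+2) (by omega) (by omega), show t+2-2 = t from by omega]
    have b3 : pv (Psi a q) (t+2+1) = Lv (a:ℕ) (pv q (t+1)) := by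
      rw [hs (t+2+1) (by omega) (by omega), show t+2+1-2 = t+1 from by omega]
    rw [b1, b2, b3, Lv_lt_iff, Lv_lt_iff]
  constructor
  · rintro ⟨hw, he1, he2⟩
    rw [a1, a2, Lv_lt_iff] at he1
    rw [a2, a3, Lv_lt_iff] at he2
    refine ⟨?_, he1, he2⟩
    intro i
    have hi := i.isLt
    have h : pv (Psi a q) ((i:ℕ)+2+2) < pv (Psi a q) ((i:ℕ)+2) ∨
        pv (Psi a q) ((i:ℕ)+2+2) < pv (Psi a q) ((i:ℕ)+2+1) := hw ⟨(i:ℕ)+2, by omega⟩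
    exact (wcorr (i:ℕ) (by omega)).mp h
  · rintro ⟨hw, he1, he2⟩
    refine ⟨?_, ?_, ?_⟩
    · intro i
      have hi := i.isLt
      rcases Nat.lt_or_ge (i:ℕ) 2 with hsm | hbig
      · rcases Nat.lt_or_ge (i:ℕ) 1 with h0 | h1
        · have h0' : (i:ℕ) = 0 := by omega
          rw [h0']
          right
          have b1 : pv (Psi a q) (0+2) = Lv (a:ℕ) (pv q 0) := by
            rw [hs (0+2) (by omega) (by omega), show 0+2-2 = 0 from by omega]
          rw [b1, show (0:ℕ)+1 = 1 from rfl, ho]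
          exact Lv_lt_top (a:ℕ) _ _ (pv_lt q 0 (by omega))
        · have h1' : (i:ℕ) = 1 := by omega
          rw [h1']
          left
          have b1 : pv (Psi a q) (1+2) = Lv (a:ℕ) (pv q 1) := by
            rw [hs (1+2) (by omega) (by omega), show 1+2-2 = 1 from by omega]
          rw [b1, ho]
          exact Lv_lt_top (a:ℕ) _ _ (pv_lt q 1 (by omega))
      · obtain ⟨t, ht⟩ : ∃ t, (i:ℕ) = t+2 := ⟨(i:ℕ)-2, by omega⟩
        rw [ht]
        exact (wcorr t (by omega)).mpr (hw ⟨t, by omega⟩)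
    · rw [a1, a2, Lv_lt_iff]
      exact he1
    · rw [a2, a3, Lv_lt_iff]
      exact he2


lemma cardB (k : ℕ) :
    Nat.card {p : Equiv.Perm (Fin (k+5)) // GoodC (k+2) p ∧ p 1 = Fin.last (k+4)}
      = (k+4) * B k := by
  let F : Fin (k+4) × {q : Equiv.Perm (Fin (k+3)) // GoodC k q} →
      {p : Equiv.Perm (Fin (k+5)) // GoodC (k+2) p ∧ p 1 = Fin.last (k+4)} :=
    fun x => ⟨Psi x.1 x.2.1, (GoodPsi x.1 x.2.1).mpr x.2.2, Psi_one x.1 x.2.1⟩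
  have Finj : Function.Injective F := by
    rintro ⟨a, q, hq⟩ ⟨a', q', hq'⟩ h
    have h' : Psi a q = Psi a' q' := congrArg Subtype.val h
    have ha : a = a' := by
      have h0 : Psi a q 0 = Psi a' q' 0 := by rw [h']
      rw [Psi_zero, Psi_zero] at h0
      exact Fin.castSucc_inj.mp h0
    subst ha
    have hqq : q = q' := by
      apply Equiv.ext
      intro i
      have h2 : Psi a q i.succ.succ = Psi a q' i.succ.succ := by rw [h']
      rw [Psi_succsucc, Psi_succsucc] at h2
      exact Fin.succAbove_right_injective (Fin.castSucc_inj.mp h2)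
    subst hqq
    rfl
  have Fsurj : Function.Surjective F := by
    rintro ⟨p, hG, h1⟩
    have h0ne : p 0 ≠ Fin.last (k+4) := by
      intro hc
      exact Fin.zero_ne_one (p.injective (hc.trans h1.symm))
    set a : Fin (k+4) := (p 0).castPred h0ne with ha
    have hvne : ∀ i : Fin (k+3), p i.succ.succ ≠ Fin.last (k+4) := by
      intro i hc
      have h3 := p.injective (hc.trans h1.symm)
      rw [← Fin.succ_zero_eq_one] at h3
      exact Fin.succ_ne_zero i (Fin.succ_injective _ h3)
    have hwne : ∀ i : Fin (k+3), (p i.succ.succ).castPred (hvne i) ≠ a := by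
      intro i hc
      have h2 : p i.succ.succ = p 0 := by
        have := congrArg Fin.castSucc hc
        rwa [Fin.castSucc_castPred, ha, Fin.castSucc_castPred] at this
      have := p.injective h2
      exact Fin.succ_ne_zero i.succ this
    have hex : ∀ i : Fin (k+3), ∃ u, a.succAbove u = (p i.succ.succ).castPred (hvne i) :=
      fun i => Fin.exists_succAbove_eq (hwne i)
    choose f hf using hex
    have finj : Function.Injective f := by
      intro i j hij
      have h2 : (p i.succ.succ).castPred (hvne i) = (p j.succ.succ).castPred (hvne j) := by
        rw [← hf i, ← hf j, hij]
      have h3 : p i.succ.succ = p j.succ.succ := by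
        have := congrArg Fin.castSucc h2
        rwa [Fin.castSucc_castPred, Fin.castSucc_castPred] at this
      exact Fin.succ_injective _ (Fin.succ_injective _ (p.injective h3))
    let q : Equiv.Perm (Fin (k+3)) :=
      Equiv.ofBijective f (Finite.injective_iff_bijective.mp finj)
    have hpq : Psi a q = p := by
      apply Equiv.ext
      intro x
      induction x using Fin.cases with
      | zero => rw [Psi_zero, ha, Fin.castSucc_castPred]
      | succ i =>
        induction i using Fin.cases with
        | zero =>
          rw [Fin.succ_zero_eq_one, Psi_one, h1]
        | succ j =>
          rw [Psi_succsucc]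
          show (a.succAbove (f j)).castSucc = _
          rw [hf j, Fin.castSucc_castPred]
    exact ⟨⟨a, q, (GoodPsi a q).mp (by rw [hpq]; exact hG)⟩, Subtype.ext hpq⟩
  have := Nat.card_congr (Equiv.ofBijective F ⟨Finj, Fsurj⟩)
  rw [← this, Nat.card_prod, Nat.card_eq_fintype_card, Fintype.card_fin, B]

lemma dichot {k : ℕ} (p : Equiv.Perm (Fin (k+5))) (h : GoodC (k+2) p) :
    p 0 = Fin.last (k+4) ∨ p 1 = Fin.last (k+4) := by
  set j := p.symm (Fin.last (k+4)) with hj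
  have hpj : p j = Fin.last (k+4) := p.apply_symm_apply _
  by_cases h0 : (j:ℕ) = 0
  · left
    have : j = 0 := by ext; simp [h0]
    rwa [this] at hpj
  by_cases h1 : (j:ℕ) = 1
  · right
    have : j = 1 := by ext; simp [h1]
    rwa [this] at hpj
  exfalso
  have hjlt := j.isLt
  have hw : pv p ((j:ℕ)-2+2) < pv p ((j:ℕ)-2) ∨ pv p ((j:ℕ)-2+2) < pv p ((j:ℕ)-2+1) :=
    h.1 ⟨(j:ℕ)-2, by omega⟩
  have b1 : pv p ((j:ℕ)-2+2) = k+4 := by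
    rw [show (j:ℕ)-2+2 = (j:ℕ) from by omega, pv_eq p j.isLt]
    have : (⟨(j:ℕ), j.isLt⟩ : Fin (k+5)) = j := by ext; simp
    rw [this, hpj, Fin.val_last]
  have b2 : pv p ((j:ℕ)-2) < k+5 := pv_lt p _ (by omega)
  have b3 : pv p ((j:ℕ)-2+1) < k+5 := pv_lt p _ (by omega)
  omega

lemma Bsplit (k : ℕ) :
    B (k+2) = Nat.card {p : Equiv.Perm (Fin (k+5)) // GoodC (k+2) p ∧ p 0 = Fin.last (k+4)}
      + Nat.card {p : Equiv.Perm (Fin (k+5)) // GoodC (k+2) p ∧ p 1 = Fin.last (k+4)} := by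
  classical
  have excl : ∀ p : Equiv.Perm (Fin (k+5)), p 1 = Fin.last (k+4) →
      ¬ p 0 = Fin.last (k+4) := fun p h1 h0 =>
    Fin.zero_ne_one (p.injective (h0.trans h1.symm))
  let E : {p : Equiv.Perm (Fin (k+5)) // GoodC (k+2) p} ≃
      {p : Equiv.Perm (Fin (k+5)) // GoodC (k+2) p ∧ p 0 = Fin.last (k+4)} ⊕
      {p : Equiv.Perm (Fin (k+5)) // GoodC (k+2) p ∧ p 1 = Fin.last (k+4)} :=
  { toFun := fun x => if h : x.1 0 = Fin.last (k+4) then Sum.inl ⟨x.1, x.2, h⟩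
      else Sum.inr ⟨x.1, x.2, (dichot x.1 x.2).resolve_left h⟩
    invFun := fun s => Sum.elim (fun y => ⟨y.1, y.2.1⟩) (fun y => ⟨y.1, y.2.1⟩) s
    left_inv := by
      rintro ⟨p, hG⟩
      by_cases h : p 0 = Fin.last (k+4) <;> simp [h]
    right_inv := by
      rintro (⟨p, hG, h0⟩ | ⟨p, hG, h1⟩)
      · simp [h0]
      · simp [excl p h1] }
  rw [B, Nat.card_congr E, Nat.card_sum]

lemma Bmain (k : ℕ) : B (k+2) = B (k+1) + (k+4) * B k := by
  rw [Bsplit, cardA, cardB]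


theorem b_recurrence (σ123 σ213 σ312 : Equiv.Perm (Fin 3))
    (h123 : σ123 0 = 0 ∧ σ123 1 = 1 ∧ σ123 2 = 2)
    (h213 : σ213 0 = 1 ∧ σ213 1 = 0 ∧ σ213 2 = 2)
    (h312 : σ312 0 = 2 ∧ σ312 1 = 0 ∧ σ312 2 = 1)
    (b : ℕ → ℕ)
    (hb : ∀ n, 3 ≤ n → b n = Nat.card {p : Equiv.Perm (Fin n) //
      (∀ i, ¬ PermOccursAt σ123 p i) ∧ (∀ i, ¬ PermOccursAt σ213 p i) ∧
      PermOccursAt σ312 p (n - 3)})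
    (hb0 : b 0 = 0) (hb1 : b 1 = 0) (hb2 : b 2 = 0) :
    b 3 = 1 ∧ b 4 = 4 ∧ ∀ n, 5 ≤ n → b n = b (n - 1) + (n - 1) * b (n - 2) := by
  have hbB : ∀ k : ℕ, b (k+3) = B k := by
    intro k
    rw [hb (k+3) (by omega)]
    apply Nat.card_congr
    apply Equiv.subtypeEquivRight
    intro p
    exact cond_iff h123 h213 h312 k p
  refine ⟨(hbB 0).trans B0, (hbB 1).trans B1, ?_⟩
  intro n hn
  obtain ⟨k, rfl⟩ : ∃ k, n = k+5 := ⟨n-5, by omega⟩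
  have e1 : b (k+5) = B (k+2) := hbB (k+2)
  have e2 : b (k+5-1) = B (k+1) := by
    rw [show k+5-1 = k+4 from by omega]
    exact hbB (k+1)
  have e3 : b (k+5-2) = B k := by
    rw [show k+5-2 = k+3 from by omega]
    exact hbB k
  rw [e1, e2, e3, show k+5-1 = k+4 from by omega]
  exact Bmain k

end
end

section
/- For every n ≥ 3 and every π ∈ S_n, the following are equivalent: (a) π has no consecutive occurrence of 123 and no consecutive occurrence of 213, and st(π_{n−2}π_{n−1}π_n) = 312; (b) π has no occurrence of the vincular pattern 12-3, no occurrence of the vincular pattern 21-3, and π_{n−1} < π_n. -/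
open MeasureTheory ProbabilityTheory Real

noncomputable section

lemma permOcc3_elim {n : ℕ} {σ : Equiv.Perm (Fin 3)} {p : Equiv.Perm (Fin n)} {i : ℕ}
    (h : PermOccursAt σ p i) :
    ∃ hn : i + 3 ≤ n,
      ((p ⟨i, by omega⟩ < p ⟨i+1, by omega⟩ ↔ σ 0 < σ 1) ∧
       (p ⟨i, by omega⟩ < p ⟨i+2, by omega⟩ ↔ σ 0 < σ 2) ∧
       (p ⟨i+1, by omega⟩ < p ⟨i+2, by omega⟩ ↔ σ 1 < σ 2)) := by
  obtain ⟨hn, hf⟩ := h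
  exact ⟨hn, hf 0 1, hf 0 2, hf 1 2⟩

lemma permOcc3_intro {n : ℕ} {σ : Equiv.Perm (Fin 3)} {p : Equiv.Perm (Fin n)} {i : ℕ}
    (hn : i + 3 ≤ n)
    (h01 : p ⟨i, by omega⟩ < p ⟨i+1, by omega⟩ ↔ σ 0 < σ 1)
    (h02 : p ⟨i, by omega⟩ < p ⟨i+2, by omega⟩ ↔ σ 0 < σ 2)
    (h12 : p ⟨i+1, by omega⟩ < p ⟨i+2, by omega⟩ ↔ σ 1 < σ 2) :
    PermOccursAt σ p i := by
  have key : ∀ (a b : Fin n) (c d : Fin 3), a ≠ b → c ≠ d →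
      (p a < p b ↔ σ c < σ d) → (p b < p a ↔ σ d < σ c) := by
    intro a b c d hab hcd h
    have h1 : p b < p a ↔ ¬ p a < p b := by
      constructor
      · exact fun h' h'' => lt_asymm h' h''
      · intro h'
        rcases lt_trichotomy (p a) (p b) with h'' | h'' | h''
        · exact absurd h'' h'
        · exact absurd (p.injective h'') hab
        · exact h''
    have h2 : σ d < σ c ↔ ¬ σ c < σ d := by
      constructor
      · exact fun h' h'' => lt_asymm h' h''
      · intro h'
        rcases lt_trichotomy (σ c) (σ d) with h'' | h'' | h''
        · exact absurd h'' h'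
        · exact absurd (σ.injective h'') hcd
        · exact h''
    rw [h1, h2, h]
  refine ⟨by omega, ?_⟩
  intro a b
  fin_cases a <;> fin_cases b
  · simp
  · exact h01
  · exact h02
  · exact key _ _ 0 1 (Fin.ne_of_val_ne (by simp)) (by decide) h01
  · simp
  · exact h12
  · exact key _ _ 0 2 (Fin.ne_of_val_ne (by simp)) (by decide) h02
  · exact key _ _ 1 2 (Fin.ne_of_val_ne (by simp)) (by decide) h12
  · simp

theorem end312_iff_vincular (n : ℕ) (hn : 3 ≤ n) (p : Equiv.Perm (Fin n))
    (σ123 σ213 σ312 : Equiv.Perm (Fin 3))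
    (h123 : σ123 0 = 0 ∧ σ123 1 = 1 ∧ σ123 2 = 2)
    (h213 : σ213 0 = 1 ∧ σ213 1 = 0 ∧ σ213 2 = 2)
    (h312 : σ312 0 = 2 ∧ σ312 1 = 0 ∧ σ312 2 = 1) :
    ((∀ i, ¬ PermOccursAt σ123 p i) ∧ (∀ i, ¬ PermOccursAt σ213 p i) ∧
        PermOccursAt σ312 p (n - 3)) ↔
      ((∀ (i j : ℕ) (h1 : i + 2 ≤ j) (h2 : j < n),
          ¬ (p ⟨i, by omega⟩ < p ⟨i + 1, by omega⟩ ∧ p ⟨i + 1, by omega⟩ < p ⟨j, h2⟩)) ∧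
        (∀ (i j : ℕ) (h1 : i + 2 ≤ j) (h2 : j < n),
          ¬ (p ⟨i + 1, by omega⟩ < p ⟨i, by omega⟩ ∧ p ⟨i, by omega⟩ < p ⟨j, h2⟩)) ∧
        p ⟨n - 2, by omega⟩ < p ⟨n - 1, by omega⟩) := by
  classical
  set P : ℕ → ℕ := fun m => if h : m < n then (p ⟨m, h⟩ : ℕ) else 0 with hP
  have hPlt : ∀ (a b : ℕ) (ha : a < n) (hb : b < n),
      (p ⟨a, ha⟩ < p ⟨b, hb⟩ ↔ P a < P b) := by
    intro a b ha hb
    simp only [hP, dif_pos ha, dif_pos hb, Fin.lt_def]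
  have hPinj : ∀ a b : ℕ, a < n → b < n → a ≠ b → P a ≠ P b := by
    intro a b ha hb hab h
    simp only [hP, dif_pos ha, dif_pos hb] at h
    have := p.injective (Fin.val_injective h)
    simp only [Fin.mk.injEq] at this
    exact hab this
  constructor
  · rintro ⟨hA, hB, hC⟩
    -- step 1: no consecutive 123/213 means each third entry is below the max of prev two
    have HA : ∀ i, i + 3 ≤ n → ¬ (P i < P (i+2) ∧ P (i+1) < P (i+2)) := by
      rintro i hi ⟨g1, g2⟩
      rcases Nat.lt_or_ge (P i) (P (i+1)) with h3 | h3
      · refine hA i (permOcc3_intro hi ?_ ?_ ?_)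
        · exact iff_of_true ((hPlt _ _ (by omega) (by omega)).mpr h3)
            (by rw [h123.1, h123.2.1]; decide)
        · exact iff_of_true ((hPlt _ _ (by omega) (by omega)).mpr g1)
            (by rw [h123.1, h123.2.2]; decide)
        · exact iff_of_true ((hPlt _ _ (by omega) (by omega)).mpr g2)
            (by rw [h123.2.1, h123.2.2]; decide)
      · have hne : P (i+1) ≠ P i := hPinj _ _ (by omega) (by omega) (by omega)
        have h3' : P (i+1) < P i := by omega
        refine hB i (permOcc3_intro hi ?_ ?_ ?_)
        · refine iff_of_false ?_ (by rw [h213.1, h213.2.1]; decide)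
          rw [hPlt _ _ (by omega) (by omega)]; omega
        · exact iff_of_true ((hPlt _ _ (by omega) (by omega)).mpr g1)
            (by rw [h213.1, h213.2.2]; decide)
        · exact iff_of_true ((hPlt _ _ (by omega) (by omega)).mpr g2)
            (by rw [h213.2.1, h213.2.2]; decide)
    -- step 2: strong induction; every later entry is below max of a pair
    have key : ∀ j i, i + 2 ≤ j → j < n → P j < P i ∨ P j < P (i+1) := by
      intro j
      induction j using Nat.strong_induction_on with
      | _ j ih =>
        intro i hij hjn
        have h2 := HA (j-2) (by omega)
        rw [show j - 2 + 2 = j by omega, show j - 2 + 1 = j - 1 by omega] at h2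
        have hne2 : P (j-2) ≠ P j := hPinj _ _ (by omega) hjn (by omega)
        have hne1 : P (j-1) ≠ P j := hPinj _ _ (by omega) hjn (by omega)
        have hcase : P j < P (j-2) ∨ P j < P (j-1) := by
          rcases not_and_or.mp h2 with h | h
          · exact Or.inl (by omega)
          · exact Or.inr (by omega)
        have finish : ∀ m, m < j → i ≤ m → P j < P m → P j < P i ∨ P j < P (i+1) := by
          intro m hmj him hlt
          rcases eq_or_ne m i with rfl | hm0
          · exact Or.inl hlt
          rcases eq_or_ne m (i+1) with rfl | hm1
          · exact Or.inr hlt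
          rcases ih m hmj i (by omega) (by omega) with h | h
          · exact Or.inl (hlt.trans h)
          · exact Or.inr (hlt.trans h)
        rcases hcase with h | h
        · exact finish (j-2) (by omega) (by omega) h
        · exact finish (j-1) (by omega) (by omega) h
    refine ⟨?_, ?_, ?_⟩
    · rintro i j h1 h2 ⟨g1, g2⟩
      replace g1 := (hPlt _ _ (by omega) (by omega)).mp g1
      replace g2 := (hPlt _ _ (by omega) h2).mp g2
      rcases key j i h1 h2 with h | h <;> omega
    · rintro i j h1 h2 ⟨g1, g2⟩
      replace g1 := (hPlt _ _ (by omega) (by omega)).mp g1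
      replace g2 := (hPlt _ _ (by omega) h2).mp g2
      rcases key j i h1 h2 with h | h <;> omega
    · obtain ⟨hn3, -, -, h12⟩ := permOcc3_elim hC
      rw [h312.2.1, h312.2.2] at h12
      have := (hPlt _ _ (by omega) (by omega)).mp (h12.mpr (by decide))
      rw [show n - 3 + 1 = n - 2 by omega, show n - 3 + 2 = n - 1 by omega] at this
      exact (hPlt _ _ (by omega) (by omega)).mpr this
  · rintro ⟨hv1, hv2, hlast⟩
    have HV1 : ∀ i j, i + 2 ≤ j → j < n → ¬ (P i < P (i+1) ∧ P (i+1) < P j) := by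
      rintro i j h1 h2 ⟨g1, g2⟩
      exact hv1 i j h1 h2 ⟨(hPlt _ _ (by omega) (by omega)).mpr g1,
        (hPlt _ _ (by omega) h2).mpr g2⟩
    have HV2 : ∀ i j, i + 2 ≤ j → j < n → ¬ (P (i+1) < P i ∧ P i < P j) := by
      rintro i j h1 h2 ⟨g1, g2⟩
      exact hv2 i j h1 h2 ⟨(hPlt _ _ (by omega) (by omega)).mpr g1,
        (hPlt _ _ (by omega) h2).mpr g2⟩
    have HL : P (n-2) < P (n-1) := (hPlt _ _ (by omega) (by omega)).mp hlast
    refine ⟨?_, ?_, ?_⟩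
    · intro i hocc
      obtain ⟨hn3, h01, -, h12⟩ := permOcc3_elim hocc
      rw [h123.1, h123.2.1] at h01
      rw [h123.2.1, h123.2.2] at h12
      have g1 := (hPlt _ _ (by omega) (by omega)).mp (h01.mpr (by decide))
      have g2 := (hPlt _ _ (by omega) (by omega)).mp (h12.mpr (by decide))
      exact HV1 i (i+2) (by omega) (by omega) ⟨g1, g2⟩
    · intro i hocc
      obtain ⟨hn3, h01, h02, -⟩ := permOcc3_elim hocc
      rw [h213.1, h213.2.1] at h01
      rw [h213.1, h213.2.2] at h02
      -- h01 : p i < p (i+1) ↔ (1 : Fin 3) < 0, which is false; get reverse strict ineq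
      have hne : P (i+1) ≠ P i := hPinj _ _ (by omega) (by omega) (by omega)
      have hnlt : ¬ P i < P (i+1) := by
        intro h
        exact absurd (h01.mp ((hPlt _ _ (by omega) (by omega)).mpr h)) (by decide)
      have g1 : P (i+1) < P i := by omega
      have g2 := (hPlt _ _ (by omega) (by omega)).mp (h02.mpr (by decide))
      exact HV2 i (i+2) (by omega) (by omega) ⟨g1, g2⟩
    · -- show the last window is a 312 occurrence
      have e1 : n - 3 + 1 = n - 2 := by omega
      have e2 : n - 3 + 2 = n - 1 := by omega
      -- first: P (n-1) < P (n-3)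
      have hne13 : P (n-3) ≠ P (n-1) := hPinj _ _ (by omega) (by omega) (by omega)
      have hne12 : P (n-3) ≠ P (n-2) := hPinj _ _ (by omega) (by omega) (by omega)
      have hc : P (n-1) < P (n-3) := by
        by_contra hcon
        have h13 : P (n-3) < P (n-1) := by omega
        rcases Nat.lt_or_ge (P (n-3)) (P (n-2)) with h | h
        · refine HV1 (n-3) (n-1) (by omega) (by omega) ⟨?_, ?_⟩ <;> rw [e1] <;> omega
        · have : P (n-2) < P (n-3) := by omega
          refine HV2 (n-3) (n-1) (by omega) (by omega) ⟨by rw [e1]; omega, by omega⟩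
      refine permOcc3_intro (by omega) ?_ ?_ ?_
      · refine iff_of_false ?_ (by rw [h312.1, h312.2.1]; decide)
        rw [hPlt _ _ (by omega) (by omega), e1]; omega
      · refine iff_of_false ?_ (by rw [h312.1, h312.2.2]; decide)
        rw [hPlt _ _ (by omega) (by omega), e2]; omega
      · refine iff_of_true ?_ (by rw [h312.2.1, h312.2.2]; decide)
        rw [hPlt _ _ (by omega) (by omega), e1, e2]; exact HL

end
end

section
/- For every n ≥ 4 and all a, b ∈ [n], the number of permutations π ∈ S_n with π_1 = a, π_n = b, st(π_{n−3}π_{n−2}π_{n−1}π_n) = 2134, no consecutive occurrence of 2134 other than this final window, and no consecutive occurrence of 3241, equals the number of permutations π' ∈ S_n with π'_1 = a, π'_n = b, st(π'_{n−3}π'_{n−2}π'_{n−1}π'_n) = 2314, no consecutive occurrence of 2314 other than this final window, and no consecutive occurrence of 3421. -/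
open MeasureTheory ProbabilityTheory Real

noncomputable section

namespace CW

variable {n : ℕ}

def v (p : Equiv.Perm (Fin n)) (j : ℕ) : ℕ := if h : j < n then (p ⟨j, h⟩ : ℕ) else 0

def cA : Equiv.Perm (Fin 4) := ⟨![1,0,2,3], ![1,0,2,3], by decide, by decide⟩
def cB : Equiv.Perm (Fin 4) := ⟨![2,1,3,0], ![3,1,0,2], by decide, by decide⟩
def cA' : Equiv.Perm (Fin 4) := ⟨![1,2,0,3], ![2,0,1,3], by decide, by decide⟩
def cB' : Equiv.Perm (Fin 4) := ⟨![2,3,1,0], ![3,2,0,1], by decide, by decide⟩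

lemma eq_cA {σ : Equiv.Perm (Fin 4)} (h : σ 0 = 1 ∧ σ 1 = 0 ∧ σ 2 = 2 ∧ σ 3 = 3) : σ = cA := by
  obtain ⟨h0, h1, h2, h3⟩ := h
  ext x
  fin_cases x <;> simp_all [cA] <;> rfl

lemma eq_cB {σ : Equiv.Perm (Fin 4)} (h : σ 0 = 2 ∧ σ 1 = 1 ∧ σ 2 = 3 ∧ σ 3 = 0) : σ = cB := by
  obtain ⟨h0, h1, h2, h3⟩ := h
  ext x
  fin_cases x <;> simp_all [cB] <;> rfl

lemma eq_cA' {σ : Equiv.Perm (Fin 4)} (h : σ 0 = 1 ∧ σ 1 = 2 ∧ σ 2 = 0 ∧ σ 3 = 3) : σ = cA' := by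
  obtain ⟨h0, h1, h2, h3⟩ := h
  ext x
  fin_cases x <;> simp_all [cA'] <;> rfl

lemma eq_cB' {σ : Equiv.Perm (Fin 4)} (h : σ 0 = 2 ∧ σ 1 = 3 ∧ σ 2 = 1 ∧ σ 3 = 0) : σ = cB' := by
  obtain ⟨h0, h1, h2, h3⟩ := h
  ext x
  fin_cases x <;> simp_all [cB'] <;> rfl

lemma bridge (c : Equiv.Perm (Fin 4)) (p : Equiv.Perm (Fin n)) (i : ℕ) :
    PermOccursAt c p i ↔
      (i + 4 ≤ n ∧ ∀ x y : Fin 4, (v p (i + x) < v p (i + y) ↔ c x < c y)) := by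
  unfold PermOccursAt
  constructor
  · rintro ⟨h, hw⟩
    refine ⟨h, fun x y => ?_⟩
    have hx : i + (x : ℕ) < n := by omega
    have hy : i + (y : ℕ) < n := by omega
    rw [v, dif_pos hx, v, dif_pos hy, ← hw x y]; exact Iff.rfl
  · rintro ⟨h, hw⟩
    refine ⟨h, fun x y => ?_⟩
    have hx : i + (x : ℕ) < n := by omega
    have hy : i + (y : ℕ) < n := by omega
    rw [← hw x y, v, dif_pos hx, v, dif_pos hy]; exact Iff.rfl

def OA (p : Equiv.Perm (Fin n)) (i : ℕ) : Prop :=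
  i + 4 ≤ n ∧ v p (i+1) < v p i ∧ v p i < v p (i+2) ∧ v p (i+2) < v p (i+3)

def OB (p : Equiv.Perm (Fin n)) (i : ℕ) : Prop :=
  i + 4 ≤ n ∧ v p (i+3) < v p (i+1) ∧ v p (i+1) < v p i ∧ v p i < v p (i+2)

def OA' (p : Equiv.Perm (Fin n)) (i : ℕ) : Prop :=
  i + 4 ≤ n ∧ v p (i+2) < v p i ∧ v p i < v p (i+1) ∧ v p (i+1) < v p (i+3)

def OB' (p : Equiv.Perm (Fin n)) (i : ℕ) : Prop :=
  i + 4 ≤ n ∧ v p (i+3) < v p (i+2) ∧ v p (i+2) < v p i ∧ v p i < v p (i+1)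

instance (p : Equiv.Perm (Fin n)) (i : ℕ) : Decidable (OA p i) := by unfold OA; infer_instance
instance (p : Equiv.Perm (Fin n)) (i : ℕ) : Decidable (OB p i) := by unfold OB; infer_instance
instance (p : Equiv.Perm (Fin n)) (i : ℕ) : Decidable (OA' p i) := by unfold OA'; infer_instance
instance (p : Equiv.Perm (Fin n)) (i : ℕ) : Decidable (OB' p i) := by unfold OB'; infer_instance

lemma occA_iff (p : Equiv.Perm (Fin n)) (i : ℕ) : PermOccursAt cA p i ↔ OA p i := by
  rw [bridge]
  unfold OA
  constructor
  · rintro ⟨h4, hw⟩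
    refine ⟨h4, ?_, ?_, ?_⟩
    · simpa using (hw 1 0).2 (by decide)
    · simpa using (hw 0 2).2 (by decide)
    · simpa using (hw 2 3).2 (by decide)
  · rintro ⟨h4, h1, h2, h3⟩
    refine ⟨h4, fun x y => ?_⟩
    fin_cases x <;> fin_cases y <;>
      simp [cA, Fin.lt_def, show i + (0:ℕ) = i from rfl] <;> omega

lemma occB_iff (p : Equiv.Perm (Fin n)) (i : ℕ) : PermOccursAt cB p i ↔ OB p i := by
  rw [bridge]
  unfold OB
  constructor
  · rintro ⟨h4, hw⟩
    refine ⟨h4, ?_, ?_, ?_⟩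
    · simpa using (hw 3 1).2 (by decide)
    · simpa using (hw 1 0).2 (by decide)
    · simpa using (hw 0 2).2 (by decide)
  · rintro ⟨h4, h1, h2, h3⟩
    refine ⟨h4, fun x y => ?_⟩
    fin_cases x <;> fin_cases y <;>
      simp [cB, Fin.lt_def, show i + (0:ℕ) = i from rfl] <;> omega

lemma occA'_iff (p : Equiv.Perm (Fin n)) (i : ℕ) : PermOccursAt cA' p i ↔ OA' p i := by
  rw [bridge]
  unfold OA'
  constructor
  · rintro ⟨h4, hw⟩
    refine ⟨h4, ?_, ?_, ?_⟩
    · simpa using (hw 2 0).2 (by decide)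
    · simpa using (hw 0 1).2 (by decide)
    · simpa using (hw 1 3).2 (by decide)
  · rintro ⟨h4, h1, h2, h3⟩
    refine ⟨h4, fun x y => ?_⟩
    fin_cases x <;> fin_cases y <;>
      simp [cA', Fin.lt_def, show i + (0:ℕ) = i from rfl] <;> omega

lemma occB'_iff (p : Equiv.Perm (Fin n)) (i : ℕ) : PermOccursAt cB' p i ↔ OB' p i := by
  rw [bridge]
  unfold OB'
  constructor
  · rintro ⟨h4, hw⟩
    refine ⟨h4, ?_, ?_, ?_⟩
    · simpa using (hw 3 2).2 (by decide)
    · simpa using (hw 2 0).2 (by decide)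
    · simpa using (hw 0 1).2 (by decide)
  · rintro ⟨h4, h1, h2, h3⟩
    refine ⟨h4, fun x y => ?_⟩
    fin_cases x <;> fin_cases y <;>
      simp [cB', Fin.lt_def, show i + (0:ℕ) = i from rfl] <;> omega



def Good (n : ℕ) (S : Finset ℕ) : Prop :=
  ∀ i ∈ insert (n-4) S, i + 4 ≤ n ∧ (i+1) ∉ insert (n-4) S

instance (S : Finset ℕ) : Decidable (Good n S) := by unfold Good; infer_instance

def ufun (T : Finset ℕ) (j : ℕ) : ℕ :=
  if 1 ≤ j ∧ j - 1 ∈ T then j + 1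
  else if 2 ≤ j ∧ j - 2 ∈ T then j - 1
  else j

lemma ufun_spec {S : Finset ℕ} (hG : Good n S) {j : ℕ} (hj : j < n) :
    ufun (insert (n-4) S) j < n ∧ ufun (insert (n-4) S) (ufun (insert (n-4) S) j) = j := by
  set T := insert (n-4) S with hT
  by_cases h1 : 1 ≤ j ∧ j - 1 ∈ T
  · have hb := hG _ h1.2
    have e1 : ufun T j = j + 1 := by rw [ufun, if_pos h1]
    have hnotmem : j ∉ T := by
      intro hc
      have h' := hb.2
      rw [show j - 1 + 1 = j by omega] at h'
      rw [hT] at hc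
      exact h' hc
    have hA : ¬ (1 ≤ j + 1 ∧ j + 1 - 1 ∈ T) := by
      intro hc
      rw [show j + 1 - 1 = j by omega] at hc
      exact hnotmem hc.2
    have hB : 2 ≤ j + 1 ∧ j + 1 - 2 ∈ T := by
      refine ⟨by omega, ?_⟩
      rw [show j + 1 - 2 = j - 1 by omega]
      exact h1.2
    have e2 : ufun T (j+1) = j := by
      rw [ufun, if_neg hA, if_pos hB]
      omega
    refine ⟨?_, by rw [e1, e2]⟩
    rw [e1]
    omega
  · by_cases h2 : 2 ≤ j ∧ j - 2 ∈ T
    · have e1 : ufun T j = j - 1 := by rw [ufun, if_neg h1, if_pos h2]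
      have hA : 1 ≤ j - 1 ∧ j - 1 - 1 ∈ T := by
        refine ⟨by omega, ?_⟩
        rw [show j - 1 - 1 = j - 2 by omega]
        exact h2.2
      have e2 : ufun T (j-1) = j := by
        rw [ufun, if_pos hA]
        omega
      refine ⟨by omega, by rw [e1, e2]⟩
    · have e1 : ufun T j = j := by rw [ufun, if_neg h1, if_neg h2]
      rw [e1]
      exact ⟨hj, e1⟩

def ffun (n : ℕ) (S : Finset ℕ) (j : Fin n) : Fin n :=
  if h : ufun (insert (n-4) S) j.1 < n then ⟨_, h⟩ else j

lemma ffun_invol {S : Finset ℕ} (hG : Good n S) : Function.Involutive (ffun n S) := by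
  intro j
  obtain ⟨h1, h2⟩ := ufun_spec hG j.2
  have h3 : ufun (insert (n-4) S) (ufun (insert (n-4) S) j.1) < n := by rw [h2]; exact j.2
  simp only [ffun, dif_pos h1, dif_pos h3]
  exact Fin.ext h2

def tau (n : ℕ) (S : Finset ℕ) : Equiv.Perm (Fin n) :=
  if h : Good n S then Function.Involutive.toPerm _ (ffun_invol h) else 1

lemma tau_apply {S : Finset ℕ} (h : Good n S) (j : Fin n) : tau n S j = ffun n S j := by
  rw [tau, dif_pos h]
  rfl

lemma tau_mul_self (n : ℕ) (S : Finset ℕ) : tau n S * tau n S = 1 := by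
  by_cases h : Good n S
  · ext j
    have := ffun_invol h j
    simp [tau_apply h, Equiv.Perm.mul_apply, this]
  · rw [tau, dif_neg h, mul_one]

lemma v_mul (p : Equiv.Perm (Fin n)) {S : Finset ℕ} (hG : Good n S) {j : ℕ} (hj : j < n) :
    v (p * tau n S) j = v p (ufun (insert (n-4) S) j) := by
  obtain ⟨h1, -⟩ := ufun_spec hG hj
  rw [v, dif_pos hj, v, dif_pos h1]
  congr 1
  rw [Equiv.Perm.mul_apply, tau_apply hG]
  congr 1
  rw [ffun, dif_pos h1]

lemma ufun_p1 {T : Finset ℕ} {i : ℕ} (hi : i ∈ T) : ufun T (i+1) = i+2 := by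
  rw [ufun, if_pos ⟨by omega, by rw [show i+1-1 = i by omega]; exact hi⟩]

lemma ufun_p2 {S : Finset ℕ} (hG : Good n S) {i : ℕ} (hi : i ∈ insert (n-4) S) :
    ufun (insert (n-4) S) (i+2) = i+1 := by
  rw [ufun, if_neg, if_pos ⟨by omega, by rw [show i+2-2 = i by omega]; exact hi⟩]
  · omega
  · rintro ⟨-, hc⟩
    rw [show i+2-1 = i+1 by omega] at hc
    exact (hG i hi).2 hc

lemma ufun_p3_mem {T : Finset ℕ} {i : ℕ} (h2 : i+2 ∈ T) : ufun T (i+3) = i+4 := by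
  rw [ufun, if_pos ⟨by omega, by rw [show i+3-1 = i+2 by omega]; exact h2⟩]

lemma ufun_p3_not {S : Finset ℕ} (hG : Good n S) {i : ℕ} (hi : i ∈ insert (n-4) S)
    (h2 : i+2 ∉ insert (n-4) S) : ufun (insert (n-4) S) (i+3) = i+3 := by
  rw [ufun, if_neg, if_neg]
  · rintro ⟨-, hc⟩
    rw [show i+3-2 = i+1 by omega] at hc
    exact (hG i hi).2 hc
  · rintro ⟨-, hc⟩
    rw [show i+3-1 = i+2 by omega] at hc
    exact h2 hc

lemma ufun_p0_not {S : Finset ℕ} (hG : Good n S) {i : ℕ} (hi : i ∈ insert (n-4) S)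
    (hL : ¬ ∃ k ∈ insert (n-4) S, k+2 = i) : ufun (insert (n-4) S) i = i := by
  rw [ufun, if_neg, if_neg]
  · rintro ⟨h2, hc⟩
    exact hL ⟨i-2, hc, by omega⟩
  · rintro ⟨h1, hc⟩
    have h' := (hG _ hc).2
    rw [show i-1+1 = i by omega] at h'
    exact h' hi

lemma ufun_zero {T : Finset ℕ} : ufun T 0 = 0 := by
  rw [ufun, if_neg (fun h => absurd h.1 (by omega)), if_neg (fun h => absurd h.1 (by omega))]

lemma ufun_last {S : Finset ℕ} (hG : Good n S) (hn4 : 4 ≤ n) :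
    ufun (insert (n-4) S) (n-1) = n-1 := by
  rw [ufun, if_neg, if_neg]
  · rintro ⟨h2, hc⟩
    exact absurd (hG _ hc).1 (by omega)
  · rintro ⟨h1, hc⟩
    exact absurd (hG _ hc).1 (by omega)

lemma no_adjacent (p : Equiv.Perm (Fin n)) {i : ℕ}
    (h1 : OA p i ∨ OB p i) (h2 : OA p (i+1) ∨ OB p (i+1)) : False := by
  simp only [OA, OB] at h1 h2
  have e1 : v p (i+1+1) = v p (i+2) := congrArg (v p) (by omega)
  have e2 : v p (i+1+2) = v p (i+3) := congrArg (v p) (by omega)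
  have e3 : v p (i+1+3) = v p (i+4) := congrArg (v p) (by omega)
  rcases h1 with h1 | h1 <;> rcases h2 with h2 | h2 <;> omega

lemma no_adjacent' (p : Equiv.Perm (Fin n)) {i : ℕ}
    (h1 : OA' p i ∨ OB' p i) (h2 : OA' p (i+1) ∨ OB' p (i+1)) : False := by
  simp only [OA', OB'] at h1 h2
  have e1 : v p (i+1+1) = v p (i+2) := congrArg (v p) (by omega)
  have e2 : v p (i+1+2) = v p (i+3) := congrArg (v p) (by omega)
  have e3 : v p (i+1+3) = v p (i+4) := congrArg (v p) (by omega)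
  rcases h1 with h1 | h1 <;> rcases h2 with h2 | h2 <;> omega

lemma window_fwd (p : Equiv.Perm (Fin n)) {S : Finset ℕ} (hG : Good n S)
    (hocc : ∀ j ∈ insert (n-4) S, OA p j ∨ OB p j) {i : ℕ} (hi : i ∈ insert (n-4) S) :
    (OA' (p * tau n S) i ∨ OB' (p * tau n S) i) ∧ (OA p i → OA' (p * tau n S) i) := by
  have hi4 : i + 4 ≤ n := (hG i hi).1
  have hq1 : v (p * tau n S) (i+1) = v p (i+2) := by
    rw [v_mul p hG (by omega), ufun_p1 hi]
  have hq2 : v (p * tau n S) (i+2) = v p (i+1) := by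
    rw [v_mul p hG (by omega), ufun_p2 hG hi]
  have hoi := hocc i hi
  simp only [OA, OB, OA', OB'] at hoi ⊢
  by_cases hR : i + 2 ∈ insert (n-4) S
  · -- right neighbour marked
    have hq3 : v (p * tau n S) (i+3) = v p (i+4) := by
      rw [v_mul p hG (by omega), ufun_p3_mem hR]
    have hoR := hocc _ hR
    simp only [OA, OB] at hoR
    have e1 : v p (i+2+1) = v p (i+3) := congrArg (v p) (by omega)
    have e2 : v p (i+2+2) = v p (i+4) := congrArg (v p) (by omega)
    have e3 : v p (i+2+3) = v p (i+5) := congrArg (v p) (by omega)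
    by_cases hL : ∃ k ∈ insert (n-4) S, k + 2 = i
    · obtain ⟨k, hkT, hki⟩ := hL
      have hq0 : v (p * tau n S) i = v p (k+1) := by
        rw [← hki, v_mul p hG (by omega), ufun_p2 hG hkT]
      have hoL := hocc k hkT
      simp only [OA, OB] at hoL
      have g1 : v p (k+2) = v p i := congrArg (v p) (by omega)
      have g2 : v p (k+3) = v p (i+1) := congrArg (v p) (by omega)
      rcases hoi with hoi | hoi <;> rcases hoR with hoR | hoR <;>
        rcases hoL with hoL | hoL <;>
        constructor <;> first
          | (intro hA; omega)
          | (left; omega)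
          | (right; omega)
          | omega
    · have hq0 : v (p * tau n S) i = v p i := by
        rw [v_mul p hG (by omega), ufun_p0_not hG hi hL]
      rcases hoi with hoi | hoi <;> rcases hoR with hoR | hoR <;>
        constructor <;> first
          | (intro hA; omega)
          | (left; omega)
          | (right; omega)
          | omega
  · -- no right neighbour
    have hq3 : v (p * tau n S) (i+3) = v p (i+3) := by
      rw [v_mul p hG (by omega), ufun_p3_not hG hi hR]
    by_cases hL : ∃ k ∈ insert (n-4) S, k + 2 = i
    · obtain ⟨k, hkT, hki⟩ := hL
      have hq0 : v (p * tau n S) i = v p (k+1) := by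
        rw [← hki, v_mul p hG (by omega), ufun_p2 hG hkT]
      have hoL := hocc k hkT
      simp only [OA, OB] at hoL
      have g1 : v p (k+2) = v p i := congrArg (v p) (by omega)
      have g2 : v p (k+3) = v p (i+1) := congrArg (v p) (by omega)
      rcases hoi with hoi | hoi <;> rcases hoL with hoL | hoL <;>
        constructor <;> first
          | (intro hA; omega)
          | (left; omega)
          | (right; omega)
          | omega
    · have hq0 : v (p * tau n S) i = v p i := by
        rw [v_mul p hG (by omega), ufun_p0_not hG hi hL]
      rcases hoi with hoi | hoi <;>
        constructor <;> first
          | (intro hA; omega)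
          | (left; omega)
          | (right; omega)
          | omega

lemma window_bwd (p : Equiv.Perm (Fin n)) {S : Finset ℕ} (hG : Good n S)
    (hocc : ∀ j ∈ insert (n-4) S, OA' p j ∨ OB' p j) {i : ℕ} (hi : i ∈ insert (n-4) S) :
    (OA (p * tau n S) i ∨ OB (p * tau n S) i) ∧
      (i + 2 ∉ insert (n-4) S → OA' p i → OA (p * tau n S) i) := by
  have hi4 : i + 4 ≤ n := (hG i hi).1
  have hq1 : v (p * tau n S) (i+1) = v p (i+2) := by
    rw [v_mul p hG (by omega), ufun_p1 hi]
  have hq2 : v (p * tau n S) (i+2) = v p (i+1) := by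
    rw [v_mul p hG (by omega), ufun_p2 hG hi]
  have hoi := hocc i hi
  simp only [OA, OB, OA', OB'] at hoi ⊢
  by_cases hR : i + 2 ∈ insert (n-4) S
  · have hq3 : v (p * tau n S) (i+3) = v p (i+4) := by
      rw [v_mul p hG (by omega), ufun_p3_mem hR]
    have hoR := hocc _ hR
    simp only [OA', OB'] at hoR
    have e1 : v p (i+2+1) = v p (i+3) := congrArg (v p) (by omega)
    have e2 : v p (i+2+2) = v p (i+4) := congrArg (v p) (by omega)
    have e3 : v p (i+2+3) = v p (i+5) := congrArg (v p) (by omega)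
    by_cases hL : ∃ k ∈ insert (n-4) S, k + 2 = i
    · obtain ⟨k, hkT, hki⟩ := hL
      have hq0 : v (p * tau n S) i = v p (k+1) := by
        rw [← hki, v_mul p hG (by omega), ufun_p2 hG hkT]
      have hoL := hocc k hkT
      simp only [OA', OB'] at hoL
      have g1 : v p (k+2) = v p i := congrArg (v p) (by omega)
      have g2 : v p (k+3) = v p (i+1) := congrArg (v p) (by omega)
      rcases hoi with hoi | hoi <;> rcases hoR with hoR | hoR <;>
        rcases hoL with hoL | hoL <;>
        constructor <;> first
          | (intro h1 h2; exact absurd hR h1)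
          | (intro h1 h2; omega)
          | (left; omega)
          | (right; omega)
          | omega
    · have hq0 : v (p * tau n S) i = v p i := by
        rw [v_mul p hG (by omega), ufun_p0_not hG hi hL]
      rcases hoi with hoi | hoi <;> rcases hoR with hoR | hoR <;>
        constructor <;> first
          | (intro h1 h2; exact absurd hR h1)
          | (intro h1 h2; omega)
          | (left; omega)
          | (right; omega)
          | omega
  · have hq3 : v (p * tau n S) (i+3) = v p (i+3) := by
      rw [v_mul p hG (by omega), ufun_p3_not hG hi hR]
    by_cases hL : ∃ k ∈ insert (n-4) S, k + 2 = i
    · obtain ⟨k, hkT, hki⟩ := hL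
      have hq0 : v (p * tau n S) i = v p (k+1) := by
        rw [← hki, v_mul p hG (by omega), ufun_p2 hG hkT]
      have hoL := hocc k hkT
      simp only [OA', OB'] at hoL
      have g1 : v p (k+2) = v p i := congrArg (v p) (by omega)
      have g2 : v p (k+3) = v p (i+1) := congrArg (v p) (by omega)
      rcases hoi with hoi | hoi <;> rcases hoL with hoL | hoL <;>
        constructor <;> first
          | (intro h1 h2; exact absurd hR h1)
          | (intro h1 h2; omega)
          | (left; omega)
          | (right; omega)
          | omega
    · have hq0 : v (p * tau n S) i = v p i := by
        rw [v_mul p hG (by omega), ufun_p0_not hG hi hL]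
      rcases hoi with hoi | hoi <;>
        constructor <;> first
          | (intro h1 h2; exact absurd hR h1)
          | (intro h1 h2; omega)
          | (left; omega)
          | (right; omega)
          | omega

lemma OA_OB_false (p : Equiv.Perm (Fin n)) {i : ℕ} (h1 : OA p i) (h2 : OB p i) : False := by
  simp only [OA, OB] at h1 h2
  omega

lemma OA'_OB'_false (p : Equiv.Perm (Fin n)) {i : ℕ} (h1 : OA' p i) (h2 : OB' p i) : False := by
  simp only [OA', OB'] at h1 h2
  omega

def M1 (n : ℕ) (a b : Fin n) : Finset (Equiv.Perm (Fin n)) :=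
  Finset.univ.filter (fun p => v p 0 = (a : ℕ) ∧ v p (n-1) = (b : ℕ) ∧ OA p (n-4))

def M2 (n : ℕ) (a b : Fin n) : Finset (Equiv.Perm (Fin n)) :=
  Finset.univ.filter (fun p => v p 0 = (a : ℕ) ∧ v p (n-1) = (b : ℕ) ∧ OA' p (n-4))

def Occ1 (n : ℕ) (p : Equiv.Perm (Fin n)) : Finset ℕ :=
  (Finset.range n).filter (fun i => (OA p i ∨ OB p i) ∧ i ≠ n-4)

def Occ2 (n : ℕ) (p : Equiv.Perm (Fin n)) : Finset ℕ :=
  (Finset.range n).filter (fun i => (OA' p i ∨ OB' p i) ∧ i ≠ n-4)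

lemma mem_fwd (hn : 4 ≤ n) {a b : Fin n} {p : Equiv.Perm (Fin n)} {S : Finset ℕ}
    (hp : p ∈ M1 n a b) (hS : S ⊆ Occ1 n p) :
    p * tau n S ∈ M2 n a b ∧ S ⊆ Occ2 n (p * tau n S) := by
  rw [M1, Finset.mem_filter] at hp
  obtain ⟨-, hpa, hpb, hpA⟩ := hp
  have hOm : ∀ j ∈ insert (n-4) S, OA p j ∨ OB p j := by
    intro j hj
    rcases Finset.mem_insert.1 hj with rfl | hj
    · exact Or.inl hpA
    · have := hS hj
      rw [Occ1, Finset.mem_filter] at this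
      exact this.2.1
  have hG : Good n S := by
    intro i hi
    refine ⟨?_, ?_⟩
    · rcases hOm i hi with h | h
      · exact h.1
      · exact h.1
    · intro hc
      exact no_adjacent p (hOm i hi) (hOm (i+1) hc)
  have htmem : n - 4 ∈ insert (n-4) S := Finset.mem_insert_self _ _
  constructor
  · rw [M2, Finset.mem_filter]
    refine ⟨Finset.mem_univ _, ?_, ?_, ?_⟩
    · rw [v_mul p hG (by omega), ufun_zero]
      exact hpa
    · rw [v_mul p hG (by omega), ufun_last hG hn]
      exact hpb
    · exact (window_fwd p hG hOm htmem).2 hpA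
  · intro i hi
    have hiI : i ∈ insert (n-4) S := Finset.mem_insert_of_mem hi
    have hio := hS hi
    rw [Occ1, Finset.mem_filter] at hio
    rw [Occ2, Finset.mem_filter]
    exact ⟨hio.1, (window_fwd p hG hOm hiI).1, hio.2.2⟩

lemma mem_bwd (hn : 4 ≤ n) {a b : Fin n} {p : Equiv.Perm (Fin n)} {S : Finset ℕ}
    (hp : p ∈ M2 n a b) (hS : S ⊆ Occ2 n p) :
    p * tau n S ∈ M1 n a b ∧ S ⊆ Occ1 n (p * tau n S) := by
  rw [M2, Finset.mem_filter] at hp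
  obtain ⟨-, hpa, hpb, hpA⟩ := hp
  have hOm : ∀ j ∈ insert (n-4) S, OA' p j ∨ OB' p j := by
    intro j hj
    rcases Finset.mem_insert.1 hj with rfl | hj
    · exact Or.inl hpA
    · have := hS hj
      rw [Occ2, Finset.mem_filter] at this
      exact this.2.1
  have hG : Good n S := by
    intro i hi
    refine ⟨?_, ?_⟩
    · rcases hOm i hi with h | h
      · exact h.1
      · exact h.1
    · intro hc
      exact no_adjacent' p (hOm i hi) (hOm (i+1) hc)
  have htmem : n - 4 ∈ insert (n-4) S := Finset.mem_insert_self _ _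
  have ht2 : n - 4 + 2 ∉ insert (n-4) S := by
    intro hc
    rcases hOm _ hc with h | h
    · exact absurd h.1 (by omega)
    · exact absurd h.1 (by omega)
  constructor
  · rw [M1, Finset.mem_filter]
    refine ⟨Finset.mem_univ _, ?_, ?_, ?_⟩
    · rw [v_mul p hG (by omega), ufun_zero]
      exact hpa
    · rw [v_mul p hG (by omega), ufun_last hG hn]
      exact hpb
    · exact (window_bwd p hG hOm htmem).2 ht2 hpA
  · intro i hi
    have hiI : i ∈ insert (n-4) S := Finset.mem_insert_of_mem hi
    have hio := hS hi
    rw [Occ2, Finset.mem_filter] at hio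
    rw [Occ1, Finset.mem_filter]
    exact ⟨hio.1, (window_bwd p hG hOm hiI).1, hio.2.2⟩

lemma card_eq (hn : 4 ≤ n) (a b : Fin n) :
    ((M1 n a b).filter (fun p => Occ1 n p = ∅)).card =
    ((M2 n a b).filter (fun p => Occ2 n p = ∅)).card := by
  have h1 : (((M1 n a b).filter (fun p => Occ1 n p = ∅)).card : ℤ) =
      ∑ x ∈ (M1 n a b).sigma (fun p => (Occ1 n p).powerset), (-1 : ℤ) ^ x.2.card := by
    rw [Finset.sum_sigma]
    rw [← Finset.sum_boole]
    exact Finset.sum_congr rfl fun p _ => (Finset.sum_powerset_neg_one_pow_card).symm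
  have h2 : (((M2 n a b).filter (fun p => Occ2 n p = ∅)).card : ℤ) =
      ∑ x ∈ (M2 n a b).sigma (fun p => (Occ2 n p).powerset), (-1 : ℤ) ^ x.2.card := by
    rw [Finset.sum_sigma]
    rw [← Finset.sum_boole]
    exact Finset.sum_congr rfl fun p _ => (Finset.sum_powerset_neg_one_pow_card).symm
  have key : ∑ x ∈ (M1 n a b).sigma (fun p => (Occ1 n p).powerset), (-1 : ℤ) ^ x.2.card =
      ∑ x ∈ (M2 n a b).sigma (fun p => (Occ2 n p).powerset), (-1 : ℤ) ^ x.2.card := by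
    refine Finset.sum_nbij' (fun x => ⟨x.1 * tau n x.2, x.2⟩) (fun x => ⟨x.1 * tau n x.2, x.2⟩)
      ?_ ?_ ?_ ?_ ?_
    · rintro ⟨p, S⟩ hx
      rw [Finset.mem_sigma] at hx ⊢
      obtain ⟨h1, h2⟩ := mem_fwd hn hx.1 (Finset.mem_powerset.1 hx.2)
      exact ⟨h1, Finset.mem_powerset.2 h2⟩
    · rintro ⟨p, S⟩ hx
      rw [Finset.mem_sigma] at hx ⊢
      obtain ⟨h1, h2⟩ := mem_bwd hn hx.1 (Finset.mem_powerset.1 hx.2)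
      exact ⟨h1, Finset.mem_powerset.2 h2⟩
    · rintro ⟨p, S⟩ hx
      show (⟨p * tau n S * tau n S, S⟩ : Σ _ : Equiv.Perm (Fin n), Finset ℕ) = ⟨p, S⟩
      rw [mul_assoc, tau_mul_self, mul_one]
    · rintro ⟨p, S⟩ hx
      show (⟨p * tau n S * tau n S, S⟩ : Σ _ : Equiv.Perm (Fin n), Finset ℕ) = ⟨p, S⟩
      rw [mul_assoc, tau_mul_self, mul_one]
    · rintro ⟨p, S⟩ hx
      rfl
  have := h1.trans (key.trans h2.symm)
  exact_mod_cast this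

lemma nat_card_eq_filter_card {α : Type*} [Fintype α] [DecidableEq α]
    (s : Finset α) (f : α → Prop) [DecidablePred f] :
    Nat.card {x // x ∈ s ∧ f x} = (s.filter f).card := by
  have e : ∀ x, (x ∈ s ∧ f x) ↔ x ∈ s.filter f := fun x => (Finset.mem_filter).symm
  rw [Nat.card_congr (Equiv.subtypeEquivRight e)]
  exact Nat.card_eq_finsetCard _

end CW

theorem count_2134_3241_eq_2314_3421 (n : ℕ) (hn : 4 ≤ n) (a b : Fin n)
    (σ τ σ' τ' : Equiv.Perm (Fin 4))
    (hσ : σ 0 = 1 ∧ σ 1 = 0 ∧ σ 2 = 2 ∧ σ 3 = 3)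
    (hτ : τ 0 = 2 ∧ τ 1 = 1 ∧ τ 2 = 3 ∧ τ 3 = 0)
    (hσ' : σ' 0 = 1 ∧ σ' 1 = 2 ∧ σ' 2 = 0 ∧ σ' 3 = 3)
    (hτ' : τ' 0 = 2 ∧ τ' 1 = 3 ∧ τ' 2 = 1 ∧ τ' 3 = 0) :
    Nat.card {p : Equiv.Perm (Fin n) //
      p ⟨0, by omega⟩ = a ∧ p ⟨n - 1, by omega⟩ = b ∧
      PermOccursAt σ p (n - 4) ∧
      (∀ i, PermOccursAt σ p i → i = n - 4) ∧
      (∀ i, ¬ PermOccursAt τ p i)} =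
    Nat.card {p : Equiv.Perm (Fin n) //
      p ⟨0, by omega⟩ = a ∧ p ⟨n - 1, by omega⟩ = b ∧
      PermOccursAt σ' p (n - 4) ∧
      (∀ i, PermOccursAt σ' p i → i = n - 4) ∧
      (∀ i, ¬ PermOccursAt τ' p i)} := by
  obtain rfl := CW.eq_cA hσ
  obtain rfl := CW.eq_cB hτ
  obtain rfl := CW.eq_cA' hσ'
  obtain rfl := CW.eq_cB' hτ'
  classical
  have e1 : ∀ p : Equiv.Perm (Fin n),
      (p ⟨0, by omega⟩ = a ∧ p ⟨n - 1, by omega⟩ = b ∧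
        PermOccursAt CW.cA p (n - 4) ∧
        (∀ i, PermOccursAt CW.cA p i → i = n - 4) ∧
        (∀ i, ¬ PermOccursAt CW.cB p i)) ↔
      (p ∈ CW.M1 n a b ∧ CW.Occ1 n p = ∅) := by
    intro p
    have hv0 : (0:ℕ) < n := by omega
    have hv1 : n - 1 < n := by omega
    constructor
    · rintro ⟨h1, h2, h3, h4, h5⟩
      refine ⟨Finset.mem_filter.2 ⟨Finset.mem_univ _, ?_, ?_, (CW.occA_iff p _).1 h3⟩, ?_⟩
      · rw [CW.v, dif_pos hv0]
        exact congrArg Fin.val h1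
      · rw [CW.v, dif_pos hv1]
        exact congrArg Fin.val h2
      · rw [Finset.eq_empty_iff_forall_notMem]
        intro i hi
        rw [CW.Occ1, Finset.mem_filter] at hi
        obtain ⟨-, hAB, hne⟩ := hi
        rcases hAB with hA | hB
        · exact hne (h4 i ((CW.occA_iff p i).2 hA))
        · exact h5 i ((CW.occB_iff p i).2 hB)
    · rintro ⟨hm, hemp⟩
      rw [CW.M1, Finset.mem_filter] at hm
      obtain ⟨-, h1, h2, h3⟩ := hm
      rw [CW.v, dif_pos hv0] at h1
      rw [CW.v, dif_pos hv1] at h2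
      refine ⟨Fin.val_injective h1, Fin.val_injective h2, (CW.occA_iff p _).2 h3, ?_, ?_⟩
      · intro i hPi
        have hOA := (CW.occA_iff p i).1 hPi
        by_contra hne
        have hmem : i ∈ CW.Occ1 n p := by
          rw [CW.Occ1, Finset.mem_filter]
          exact ⟨Finset.mem_range.2 (by have := hOA.1; omega), Or.inl hOA, hne⟩
        rw [hemp] at hmem
        exact absurd hmem (Finset.notMem_empty i)
      · intro i hPi
        have hOB := (CW.occB_iff p i).1 hPi
        by_cases hne : i = n - 4
        · subst hne
          exact CW.OA_OB_false p h3 hOB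
        · have hmem : i ∈ CW.Occ1 n p := by
            rw [CW.Occ1, Finset.mem_filter]
            exact ⟨Finset.mem_range.2 (by have := hOB.1; omega), Or.inr hOB, hne⟩
          rw [hemp] at hmem
          exact absurd hmem (Finset.notMem_empty i)
  have e2 : ∀ p : Equiv.Perm (Fin n),
      (p ⟨0, by omega⟩ = a ∧ p ⟨n - 1, by omega⟩ = b ∧
        PermOccursAt CW.cA' p (n - 4) ∧
        (∀ i, PermOccursAt CW.cA' p i → i = n - 4) ∧
        (∀ i, ¬ PermOccursAt CW.cB' p i)) ↔
      (p ∈ CW.M2 n a b ∧ CW.Occ2 n p = ∅) := by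
    intro p
    have hv0 : (0:ℕ) < n := by omega
    have hv1 : n - 1 < n := by omega
    constructor
    · rintro ⟨h1, h2, h3, h4, h5⟩
      refine ⟨Finset.mem_filter.2 ⟨Finset.mem_univ _, ?_, ?_, (CW.occA'_iff p _).1 h3⟩, ?_⟩
      · rw [CW.v, dif_pos hv0]
        exact congrArg Fin.val h1
      · rw [CW.v, dif_pos hv1]
        exact congrArg Fin.val h2
      · rw [Finset.eq_empty_iff_forall_notMem]
        intro i hi
        rw [CW.Occ2, Finset.mem_filter] at hi
        obtain ⟨-, hAB, hne⟩ := hi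
        rcases hAB with hA | hB
        · exact hne (h4 i ((CW.occA'_iff p i).2 hA))
        · exact h5 i ((CW.occB'_iff p i).2 hB)
    · rintro ⟨hm, hemp⟩
      rw [CW.M2, Finset.mem_filter] at hm
      obtain ⟨-, h1, h2, h3⟩ := hm
      rw [CW.v, dif_pos hv0] at h1
      rw [CW.v, dif_pos hv1] at h2
      refine ⟨Fin.val_injective h1, Fin.val_injective h2, (CW.occA'_iff p _).2 h3, ?_, ?_⟩
      · intro i hPi
        have hOA := (CW.occA'_iff p i).1 hPi
        by_contra hne
        have hmem : i ∈ CW.Occ2 n p := by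
          rw [CW.Occ2, Finset.mem_filter]
          exact ⟨Finset.mem_range.2 (by have := hOA.1; omega), Or.inl hOA, hne⟩
        rw [hemp] at hmem
        exact absurd hmem (Finset.notMem_empty i)
      · intro i hPi
        have hOB := (CW.occB'_iff p i).1 hPi
        by_cases hne : i = n - 4
        · subst hne
          exact CW.OA'_OB'_false p h3 hOB
        · have hmem : i ∈ CW.Occ2 n p := by
            rw [CW.Occ2, Finset.mem_filter]
            exact ⟨Finset.mem_range.2 (by have := hOB.1; omega), Or.inr hOB, hne⟩
          rw [hemp] at hmem
          exact absurd hmem (Finset.notMem_empty i)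
  calc Nat.card {p : Equiv.Perm (Fin n) //
      p ⟨0, by omega⟩ = a ∧ p ⟨n - 1, by omega⟩ = b ∧
      PermOccursAt CW.cA p (n - 4) ∧
      (∀ i, PermOccursAt CW.cA p i → i = n - 4) ∧
      (∀ i, ¬ PermOccursAt CW.cB p i)}
      = Nat.card {p : Equiv.Perm (Fin n) // p ∈ CW.M1 n a b ∧ CW.Occ1 n p = ∅} :=
        Nat.card_congr (Equiv.subtypeEquivRight e1)
    _ = ((CW.M1 n a b).filter (fun p => CW.Occ1 n p = ∅)).card :=
        CW.nat_card_eq_filter_card _ _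
    _ = ((CW.M2 n a b).filter (fun p => CW.Occ2 n p = ∅)).card := CW.card_eq hn a b
    _ = Nat.card {p : Equiv.Perm (Fin n) // p ∈ CW.M2 n a b ∧ CW.Occ2 n p = ∅} :=
        (CW.nat_card_eq_filter_card _ _).symm
    _ = Nat.card {p : Equiv.Perm (Fin n) //
        p ⟨0, by omega⟩ = a ∧ p ⟨n - 1, by omega⟩ = b ∧
        PermOccursAt CW.cA' p (n - 4) ∧
        (∀ i, PermOccursAt CW.cA' p i → i = n - 4) ∧
        (∀ i, ¬ PermOccursAt CW.cB' p i)} :=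
        (Nat.card_congr (Equiv.subtypeEquivRight e2)).symm

end
end
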